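/- arXiv:2504.03371 — 11 statements merged into one kernel-verified Lean document; each statement's English description precedes it below -/
import Mathlib

section
/- Let K be a compact topological space, X a real normed space, and f, g nonzero elements of C(K, X). Then f ⊥_B g if and only if there exist u₁, u₂ ∈ M_f such that g(u₁) ∈ f(u₁)⁺ and g(u₂) ∈ f(u₂)⁻. -/
open Filter Topology

/-- A cluster point of a real sequence eventually bounded below by `L` is `≥ L`. -/
private lemma cluster_ge {a : ℕ → ℝ} {c L : ℝ} (hc : MapClusterPt c atTop a)
    (h : ∀ᶠ n in atTop, L ≤ a n) : L ≤ c := by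
  by_contra hlt
  push_neg at hlt
  have hfreq := mapClusterPt_iff_frequently.1 hc (Set.Iio L) (Iio_mem_nhds hlt)
  exact absurd ((h.and_frequently hfreq).exists) (by push_neg; intro n hn; exact not_lt.2 hn)

/-- Convexity of the norm along a segment. -/
private lemma seg_norm {X : Type*} [NormedAddCommGroup X] [NormedSpace ℝ X]
    (x y : X) {s t : ℝ} (hs : 0 < s) (hst : s ≤ t) :
    ‖x + s • y‖ ≤ (1 - s / t) * ‖x‖ + (s / t) * ‖x + t • y‖ := by
  have ht : 0 < t := hs.trans_le hst
  have hst1 : s / t ≤ 1 := (div_le_one ht).2 hst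
  have hstn : 0 ≤ s / t := by positivity
  have hrw : x + s • y = (1 - s / t) • x + (s / t) • (x + t • y) := by
    rw [smul_add, smul_smul, div_mul_cancel₀ s ht.ne', sub_smul, one_smul]
    abel
  calc ‖x + s • y‖ = ‖(1 - s / t) • x + (s / t) • (x + t • y)‖ := by rw [hrw]
    _ ≤ ‖(1 - s / t) • x‖ + ‖(s / t) • (x + t • y)‖ := norm_add_le _ _
    _ = (1 - s / t) * ‖x‖ + (s / t) * ‖x + t • y‖ := by
        rw [norm_smul, norm_smul, Real.norm_of_nonneg (by linarith), Real.norm_of_nonneg hstn]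

/-- One-sided version: if `‖f + λ g‖ ≥ ‖f‖` for all `λ ≥ 0`, then some norm-attaining point `u`
of `f` satisfies `g u ∈ (f u)⁺`. -/
private lemma aux_plus {K X : Type*} [TopologicalSpace K] [CompactSpace K] [Nonempty K]
    [NormedAddCommGroup X] [NormedSpace ℝ X] (f g : C(K, X))
    (h : ∀ lam : ℝ, 0 ≤ lam → ‖f + lam • g‖ ≥ ‖f‖) :
    ∃ u : K, ‖f u‖ = ‖f‖ ∧ ∀ lam : ℝ, 0 ≤ lam → ‖f u + lam • g u‖ ≥ ‖f u‖ := by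
  set c : ℕ → ℝ := fun n => 1 / (n + 1) with hc
  have hcpos : ∀ n, 0 < c n := fun n => by positivity
  have hc0 : Tendsto c atTop (𝓝 0) := tendsto_one_div_add_atTop_nhds_zero_nat
  -- choose maximizers of `‖f k + c n • g k‖`
  have hex : ∀ n : ℕ, ∃ u : K, ∀ k : K, ‖f k + c n • g k‖ ≤ ‖f u + c n • g u‖ := by
    intro n
    obtain ⟨u, -, hu⟩ := isCompact_univ.exists_isMaxOn Set.univ_nonempty
      (((f.continuous.add (g.continuous.const_smul (c n))).norm).continuousOn)
    exact ⟨u, fun k => hu (Set.mem_univ k)⟩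
  choose u hu using hex
  have hlow : ∀ n, ‖f‖ ≤ ‖f (u n) + c n • g (u n)‖ := by
    intro n
    have h1 : ‖f‖ ≤ ‖f + c n • g‖ := h (c n) (hcpos n).le
    have h2 : ‖f + c n • g‖ ≤ ‖f (u n) + c n • g (u n)‖ :=
      ((f + c n • g).norm_le (norm_nonneg _)).2 (fun k => by simpa using hu n k)
    linarith
  -- cluster point of the maximizers
  obtain ⟨x, hx⟩ := exists_clusterPt_of_compactSpace (Filter.map u atTop)
  have hx' : MapClusterPt x atTop u := hx
  -- `x` is norm attaining for `f`
  have hfx_le : ‖f x‖ ≤ ‖f‖ := f.norm_coe_le_norm x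
  have hfx : ‖f x‖ = ‖f‖ := by
    refine le_antisymm hfx_le (le_of_forall_sub_le fun ε hε => ?_)
    have hcl := MapClusterPt.continuousAt_comp (f := fun k : K => ‖f k‖)
      (f.continuous.norm.continuousAt) hx'
    refine cluster_ge hcl ?_
    have hev : ∀ᶠ n in atTop, c n * ‖g‖ < ε := by
      have : Tendsto (fun n => c n * ‖g‖) atTop (𝓝 (0 * ‖g‖)) := hc0.mul_const _
      rw [zero_mul] at this
      exact this.eventually (eventually_lt_nhds hε)
    filter_upwards [hev] with n hn
    show ‖f‖ - ε ≤ ‖f (u n)‖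
    have h1 := hlow n
    have h2 : ‖f (u n) + c n • g (u n)‖ ≤ ‖f (u n)‖ + c n * ‖g‖ := by
      calc ‖f (u n) + c n • g (u n)‖ ≤ ‖f (u n)‖ + ‖c n • g (u n)‖ := norm_add_le _ _
        _ ≤ ‖f (u n)‖ + c n * ‖g‖ := by
            rw [norm_smul, Real.norm_of_nonneg (hcpos n).le]
            have := g.norm_coe_le_norm (u n)
            nlinarith [hcpos n]
    linarith
  refine ⟨x, hfx, fun lam hlam => ?_⟩
  rcases eq_or_lt_of_le hlam with rfl | hlam'
  · simp
  · rw [hfx, ge_iff_le]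
    have hcl := MapClusterPt.continuousAt_comp (f := fun k : K => ‖f k + lam • g k‖)
      ((f.continuous.add (g.continuous.const_smul lam)).norm.continuousAt) hx'
    refine cluster_ge hcl ?_
    have hev : ∀ᶠ n in atTop, c n ≤ lam := by
      exact hc0.eventually (eventually_le_nhds hlam')
    filter_upwards [hev] with n hn
    show ‖f‖ ≤ ‖f (u n) + lam • g (u n)‖
    have hseg := seg_norm (f (u n)) (g (u n)) (hcpos n) hn
    have h1 := hlow n
    have hM : ‖f (u n)‖ ≤ ‖f‖ := f.norm_coe_le_norm (u n)
    set t : ℝ := c n / lam with htdef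
    have ht : 0 < t := div_pos (hcpos n) hlam'
    have ht1 : t ≤ 1 := (div_le_one hlam').2 hn
    have key : t * ‖f‖ ≤ t * ‖f (u n) + lam • g (u n)‖ := by nlinarith
    exact le_of_mul_le_mul_left key ht

/-- Characterization of Birkhoff–James orthogonality in `C(K, X)` for `K` compact and
`X` a real normed space: `f ⊥_B g` iff there are `u₁, u₂` in the norm-attaining set of `f`
with `g u₁ ∈ (f u₁)⁺` and `g u₂ ∈ (f u₂)⁻`. -/
theorem bj_char_CKX {K X : Type*} [TopologicalSpace K] [CompactSpace K]
    [NormedAddCommGroup X] [NormedSpace ℝ X]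
    (f g : C(K, X)) (hf : f ≠ 0) (hg : g ≠ 0) :
    (∀ lam : ℝ, ‖f + lam • g‖ ≥ ‖f‖) ↔
      ∃ u₁ u₂ : K, ‖f u₁‖ = ‖f‖ ∧ ‖f u₂‖ = ‖f‖ ∧
        (∀ lam : ℝ, 0 ≤ lam → ‖f u₁ + lam • g u₁‖ ≥ ‖f u₁‖) ∧
        (∀ lam : ℝ, lam ≤ 0 → ‖f u₂ + lam • g u₂‖ ≥ ‖f u₂‖) := by
  have hK : Nonempty K := by
    by_contra hK
    rw [not_nonempty_iff] at hK
    exact hf (ContinuousMap.ext fun k => isEmptyElim k)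
  constructor
  · intro h
    obtain ⟨u₁, hu₁, hu₁'⟩ := aux_plus f g (fun lam _ => h lam)
    obtain ⟨u₂, hu₂, hu₂'⟩ := aux_plus f (-g) (fun lam _ => by
      simpa [smul_neg, ← neg_smul] using h (-lam))
    refine ⟨u₁, u₂, hu₁, hu₂, hu₁', fun lam hlam => ?_⟩
    have := hu₂' (-lam) (by linarith)
    simpa using this
  · rintro ⟨u₁, u₂, h1, h2, h3, h4⟩ lam
    rcases le_or_gt 0 lam with hlam | hlam
    · calc ‖f‖ = ‖f u₁‖ := h1.symm
        _ ≤ ‖f u₁ + lam • g u₁‖ := h3 lam hlam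
        _ = ‖(f + lam • g) u₁‖ := by simp
        _ ≤ ‖f + lam • g‖ := (f + lam • g).norm_coe_le_norm u₁
    · calc ‖f‖ = ‖f u₂‖ := h2.symm
        _ ≤ ‖f u₂ + lam • g u₂‖ := h4 lam hlam.le
        _ = ‖(f + lam • g) u₂‖ := by simp
        _ ≤ ‖f + lam • g‖ := (f + lam • g).norm_coe_le_norm u₂
end

section
/- Let K be a locally compact Hausdorff space and X a Banach space over K ∈ {ℝ, ℂ}. Let f, g ∈ C₀(K, X) be such that M_f is connected. Then f ⊥_B g if and only if for each unimodular scalar t there exists k_t ∈ M_f such that f(k_t) ⊥_t g(k_t), i.e., ‖f(k_t) + αt·g(k_t)‖ ≥ ‖f(k_t)‖ for all real α. -/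
/-
For fixed `x, z`, the real function `a ↦ ‖x + a • z‖` is convex. Hence at every point `k` of
`M_f` the vector `f k` is orthogonal to `t • g k` along `a ≥ 0` or along `a ≤ 0`, and the two
sets of such points are closed. Each of them meets `M_f`: if `f ⊥_B g`, then `f + a t g` attains
its norm at a point which, by convexity, stays good for all `b ≥ a`; as `a → 0⁺` these nested
compact sets have a common point, which lies in `M_f`. Connectedness of `M_f` then yields a point
in both sets, i.e. `f k ⊥_t g k`.
-/

open Filter Set ZeroAtInfty

section NormAlongLine

variable (𝕜 : Type*) {X : Type*} [RCLike 𝕜] [SeminormedAddCommGroup X] [NormedSpace 𝕜 X]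

theorem convexOn_norm_add_ofReal_smul (x z : X) :
    ConvexOn ℝ univ (fun a : ℝ => ‖x + (a : 𝕜) • z‖) := by
  refine ⟨convex_univ, fun a _ b _ μ ν hμ hν hμν => ?_⟩
  have hline : x + ((μ • a + ν • b : ℝ) : 𝕜) • z =
      (μ : 𝕜) • (x + (a : 𝕜) • z) + (ν : 𝕜) • (x + (b : 𝕜) • z) := by
    have hμν' : (μ : 𝕜) + ν = 1 := by exact_mod_cast hμν
    simp only [smul_eq_mul, RCLike.ofReal_add, RCLike.ofReal_mul, smul_add, smul_smul,
      add_smul]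
    rw [add_add_add_comm, ← add_smul (μ : 𝕜) ν x, hμν', one_smul, ← add_smul]
  calc ‖x + ((μ • a + ν • b : ℝ) : 𝕜) • z‖
      ≤ ‖(μ : 𝕜) • (x + (a : 𝕜) • z)‖ + ‖(ν : 𝕜) • (x + (b : 𝕜) • z)‖ :=
        hline ▸ norm_add_le _ _
    _ = μ • ‖x + (a : 𝕜) • z‖ + ν • ‖x + (b : 𝕜) • z‖ := by
        rw [norm_smul, norm_smul, RCLike.norm_ofReal, RCLike.norm_ofReal, abs_of_nonneg hμ,
          abs_of_nonneg hν, smul_eq_mul, smul_eq_mul]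

/-- The paper's `x ⊥_t y` is `RayOrthogonal 𝕜 x (t • y) ∧ RayOrthogonal 𝕜 x (-(t • y))`. -/
def RayOrthogonal (x z : X) : Prop :=
  ∀ a : ℝ, 0 ≤ a → ‖x‖ ≤ ‖x + (a : 𝕜) • z‖

variable {𝕜}

theorem norm_add_ofReal_smul_mono {x z : X} {a b : ℝ} (ha : 0 < a) (hab : a ≤ b)
    (h : ‖x‖ ≤ ‖x + (a : 𝕜) • z‖) : ‖x + (a : 𝕜) • z‖ ≤ ‖x + (b : 𝕜) • z‖ := by
  have hconv := (convexOn_norm_add_ofReal_smul 𝕜 x z).le_right_of_left_le'' (mem_univ 0)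
    (mem_univ b) ha hab
  simpa using hconv (by simpa using h)

theorem rayOrthogonal_or_rayOrthogonal_neg (x z : X) :
    RayOrthogonal 𝕜 x z ∨ RayOrthogonal 𝕜 x (-z) := by
  unfold RayOrthogonal
  by_contra! h
  obtain ⟨⟨a, ha, hlt_pos⟩, ⟨b, hb, hlt_neg⟩⟩ := h
  have hmem : (0 : ℝ) ∈ segment ℝ (-b) a := by
    rw [segment_eq_Icc (by linarith)]; exact ⟨by linarith, ha⟩
  have hle := (convexOn_norm_add_ofReal_smul 𝕜 x z).le_on_segment (mem_univ _) (mem_univ _) hmem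
  simp only [RCLike.ofReal_zero, zero_smul, add_zero, RCLike.ofReal_neg, neg_smul,
    smul_neg] at hle hlt_neg
  exact (hle.trans_lt (max_lt hlt_neg hlt_pos)).false

theorem RayOrthogonal.forall_of_neg {x z : X} (hpos : RayOrthogonal 𝕜 x z)
    (hneg : RayOrthogonal 𝕜 x (-z)) (a : ℝ) : ‖x‖ ≤ ‖x + (a : 𝕜) • z‖ := by
  rcases le_total 0 a with ha | ha
  · exact hpos a ha
  · simpa using hneg (-a) (neg_nonneg.mpr ha)

theorem isClosed_setOf_rayOrthogonal {K : Type*} [TopologicalSpace K] {f g : K → X}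
    (hf : Continuous f) (hg : Continuous g) : IsClosed {k | RayOrthogonal 𝕜 (f k) (g k)} := by
  simp only [RayOrthogonal, ofPred_forall]
  exact isClosed_iInter fun a => isClosed_iInter fun _ =>
    isClosed_le hf.norm (hf.add (hg.const_smul _)).norm

theorem IsPreconnected.exists_forall_le_norm_add_ofReal_smul {K : Type*} [TopologicalSpace K]
    {S : Set K} (hS : IsPreconnected S) {f g : K → X} (hf : Continuous f) (hg : Continuous g)
    (hpos : ∃ k ∈ S, RayOrthogonal 𝕜 (f k) (g k))
    (hneg : ∃ k ∈ S, RayOrthogonal 𝕜 (f k) (-g k)) :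
    ∃ k ∈ S, ∀ a : ℝ, ‖f k‖ ≤ ‖f k + (a : 𝕜) • g k‖ := by
  obtain ⟨k, hkS, hkpos, hkneg⟩ := isPreconnected_closed_iff.mp hS _ _
    (isClosed_setOf_rayOrthogonal hf hg) (isClosed_setOf_rayOrthogonal hf hg.neg)
    (fun k _ => rayOrthogonal_or_rayOrthogonal_neg (f k) (g k)) hpos hneg
  exact ⟨k, hkS, hkpos.forall_of_neg hkneg⟩

end NormAlongLine

namespace ZeroAtInftyContinuousMap

variable {K X : Type*} [TopologicalSpace K] [SeminormedAddCommGroup X]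

theorem norm_apply_le (f : C₀(K, X)) (k : K) : ‖f k‖ ≤ ‖f‖ :=
  f.toBCF.norm_coe_le_norm k

theorem isCompact_setOf_le_norm (f : C₀(K, X)) {c : ℝ} (hc : 0 < c) :
    IsCompact {k | c ≤ ‖f k‖} := by
  have hsmall : ∀ᶠ k in cocompact K, ‖f k‖ < c := by
    simpa using (zero_at_infty f).norm.eventually_lt_const (by simpa using hc)
  obtain ⟨S, hS, hSsub⟩ := mem_cocompact.mp hsmall
  refine hS.of_isClosed_subset (isClosed_le continuous_const (map_continuous f).norm) ?_
  intro k hk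
  by_contra hkS
  exact (hSsub hkS : ‖f k‖ < c).not_ge (show c ≤ ‖f k‖ from hk)

theorem exists_norm_apply_eq (f : C₀(K, X)) (hf : 0 < ‖f‖) : ∃ k, ‖f k‖ = ‖f‖ := by
  obtain ⟨k₀, hk₀⟩ : ∃ k, 0 < ‖f k‖ := by
    by_contra! h
    exact hf.not_ge ((BoundedContinuousFunction.norm_le le_rfl).mpr h)
  have hsmall : ∀ᶠ k in cocompact K, ‖f k‖ ≤ ‖f k₀‖ :=
    ((zero_at_infty f).norm.eventually_lt_const (by simpa using hk₀)).mono fun _ => le_of_lt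
  obtain ⟨k, hk⟩ := (map_continuous f).norm.exists_forall_ge' k₀ hsmall
  exact ⟨k, (norm_apply_le f k).antisymm
    ((BoundedContinuousFunction.norm_le (norm_nonneg _)).mpr hk)⟩

variable {𝕜 : Type*} [RCLike 𝕜] [NormedSpace 𝕜 X]

theorem exists_norm_apply_eq_rayOrthogonal (f g : C₀(K, X)) (hf : 0 < ‖f‖)
    (h : ∀ a : ℝ, 0 < a → ‖f‖ ≤ ‖f + (a : 𝕜) • g‖) :
    ∃ k, ‖f k‖ = ‖f‖ ∧ RayOrthogonal 𝕜 (f k) (g k) := by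
  set E : Ioi (0 : ℝ) → Set K := fun a => {k | ∀ b : ℝ, a ≤ b → ‖f‖ ≤ ‖f k + (b : 𝕜) • g k‖}
  have hE_closed : ∀ a, IsClosed (E a) := by
    intro a
    simp only [E, ofPred_forall]
    exact isClosed_iInter fun b => isClosed_iInter fun _ =>
      isClosed_le continuous_const (f.continuous.add (g.continuous.const_smul _)).norm
  have hE_compact : ∀ a, IsCompact (E a) := fun a =>
    (isCompact_setOf_le_norm (f + (a : 𝕜) • g) hf).of_isClosed_subset (hE_closed a)
      fun k hk => hk a le_rfl
  -- a maximum point of `‖f + a • g‖` lies in `E a` by convexity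
  have hE_nonempty : ∀ a, (E a).Nonempty := by
    intro a
    obtain ⟨k, hk⟩ := exists_norm_apply_eq (f + (a : 𝕜) • g) (hf.trans_le (h a a.2))
    have ha : ‖f‖ ≤ ‖f k + (a : 𝕜) • g k‖ := (h a a.2).trans hk.ge
    exact ⟨k, fun b hab =>
      ha.trans (norm_add_ofReal_smul_mono a.2 hab ((norm_apply_le f k).trans ha))⟩
  have hE_directed : Directed (· ⊇ ·) E :=
    Monotone.directed_ge fun a b hab k hk c hbc => hk c ((show (a : ℝ) ≤ b from hab).trans hbc)
  obtain ⟨k, hk⟩ := IsCompact.nonempty_iInter_of_directed_nonempty_isCompact_isClosed E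
    hE_directed hE_nonempty hE_compact hE_closed
  have hk_pos : ∀ b : ℝ, 0 < b → ‖f‖ ≤ ‖f k + (b : 𝕜) • g k‖ :=
    fun b hb => mem_iInter.mp hk ⟨b, hb⟩ b le_rfl
  have hk_norm : ‖f k‖ = ‖f‖ := by
    have hcont : Continuous fun b : ℝ => ‖f k + (b : 𝕜) • g k‖ := by fun_prop
    have hlim := (hcont.tendsto 0).mono_left (nhdsWithin_le_nhds (s := Ioi 0))
    simp only [RCLike.ofReal_zero, zero_smul, add_zero] at hlim
    exact (norm_apply_le f k).antisymm
      (ge_of_tendsto hlim (eventually_nhdsWithin_of_forall hk_pos))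
  refine ⟨k, hk_norm, fun b hb => ?_⟩
  rcases hb.eq_or_lt with rfl | hb
  · simp
  · exact hk_norm ▸ hk_pos b hb

end ZeroAtInftyContinuousMap

theorem bj_char_C0KX_directional_general {𝕜 K X : Type*} [RCLike 𝕜] [TopologicalSpace K]
    [NormedAddCommGroup X] [NormedSpace 𝕜 X]
    (f g : C₀(K, X)) (hMf : IsConnected {k : K | ‖f k‖ = ‖f‖}) :
    (∀ lam : 𝕜, ‖f + lam • g‖ ≥ ‖f‖) ↔
      ∀ t : 𝕜, ‖t‖ = 1 → ∃ kt : K, ‖f kt‖ = ‖f‖ ∧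
        ∀ α : ℝ, ‖f kt + (α • t) • g kt‖ ≥ ‖f kt‖ := by
  simp only [ge_iff_le, RCLike.real_smul_eq_coe_mul, mul_smul]
  constructor
  · intro horth t _
    rcases (norm_nonneg f).eq_or_lt with hf | hf
    · obtain ⟨k, hk⟩ := hMf.nonempty
      exact ⟨k, hk, fun _ => by rw [show ‖f k‖ = 0 from hk.trans hf.symm]; positivity⟩
    have hray (s : 𝕜) : ∃ k ∈ {k | ‖f k‖ = ‖f‖}, RayOrthogonal 𝕜 (f k) (s • g k) :=
      f.exists_norm_apply_eq_rayOrthogonal (s • g) hf fun a _ => by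
        simpa [smul_smul] using horth (a * s)
    exact hMf.isPreconnected.exists_forall_le_norm_add_ofReal_smul f.continuous
      (g.continuous.const_smul t) (hray t) (by simpa using hray (-t))
  · intro h lam
    rcases eq_or_ne lam 0 with rfl | hlam
    · simp
    have hlam' : (‖lam‖ : 𝕜) ≠ 0 := by simpa using hlam
    obtain ⟨k, hk, hkt⟩ := h (lam / ‖lam‖) (by simp [hlam])
    calc ‖f‖ = ‖f k‖ := hk.symm
      _ ≤ ‖f k + lam • g k‖ := by simpa [smul_smul, mul_div_cancel₀ _ hlam'] using hkt ‖lam‖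
      _ ≤ ‖f + lam • g‖ := (f + lam • g).norm_apply_le k

/-- Birkhoff–James orthogonality in `C₀(K, X)` via directional orthogonality, when the
norm-attaining set `M_f` is connected. -/
theorem bj_char_C0KX_directional {𝕜 K X : Type*} [RCLike 𝕜] [TopologicalSpace K]
    [LocallyCompactSpace K] [T2Space K]
    [NormedAddCommGroup X] [NormedSpace 𝕜 X] [CompleteSpace X]
    (f g : C₀(K, X)) (hMf : IsConnected {k : K | ‖f k‖ = ‖f‖}) :
    (∀ lam : 𝕜, ‖f + lam • g‖ ≥ ‖f‖) ↔
      ∀ t : 𝕜, ‖t‖ = 1 → ∃ kt : K, ‖f kt‖ = ‖f‖ ∧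
        ∀ α : ℝ, ‖f kt + (α • t) • g kt‖ ≥ ‖f kt‖ :=
  bj_char_C0KX_directional_general f g hMf
end

section
/- Let K be a compact Hausdorff space and X a real Banach space. Let k₀ be an isolated point of K and suppose f ∈ C(K, X) satisfies f(k) = 0 for all k ≠ k₀, with f(k₀) a nonzero left symmetric point of X. Then f is a left symmetric point of C(K, X). -/
open Topology Filter
/-- If `f ∈ C(K, X)` vanishes away from an isolated point `k₀` and `f k₀` is a nonzero
left symmetric point of `X`, then `f` is a left symmetric point of `C(K, X)`. -/
theorem left_symmetric_of_indicator {K X : Type*} [TopologicalSpace K] [CompactSpace K]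
    [T2Space K] [NormedAddCommGroup X] [NormedSpace ℝ X] [CompleteSpace X]
    (f : C(K, X)) (k₀ : K) (hiso : 𝓝[≠] k₀ = ⊥)
    (hvanish : ∀ k : K, k ≠ k₀ → f k = 0) (hne : f k₀ ≠ 0)
    (hls : ∀ y : X, (∀ lam : ℝ, ‖f k₀ + lam • y‖ ≥ ‖f k₀‖) →
      ∀ lam : ℝ, ‖y + lam • f k₀‖ ≥ ‖y‖) :
    ∀ g : C(K, X), (∀ lam : ℝ, ‖f + lam • g‖ ≥ ‖f‖) →
      ∀ lam : ℝ, ‖g + lam • f‖ ≥ ‖g‖ := by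
  intro g hg lam
  have hxpos : 0 < ‖f k₀‖ := norm_pos_iff.2 hne
  -- ‖f‖ = ‖f k₀‖
  have hfx : ‖f‖ = ‖f k₀‖ := by
    apply le_antisymm
    · refine (ContinuousMap.norm_le f (norm_nonneg _)).2 ?_
      intro k
      rcases eq_or_ne k k₀ with rfl | h
      · exact le_rfl
      · simp [hvanish k h]
    · exact f.norm_coe_le_norm k₀
  -- f k₀ ⊥_B g k₀
  have key : ∀ mu : ℝ, ‖f k₀ + mu • g k₀‖ ≥ ‖f k₀‖ := by
    intro mu
    by_contra hlt
    push_neg at hlt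
    set δ := ‖f k₀‖ - ‖f k₀ + mu • g k₀‖ with hδ
    have hδpos : 0 < δ := by simp only [hδ]; linarith
    have hden : 0 < |mu| * ‖g‖ + δ := by positivity
    set t := min 1 (‖f k₀‖ / (|mu| * ‖g‖ + δ)) with ht
    have htpos : 0 < t := lt_min one_pos (div_pos hxpos hden)
    have ht1 : t ≤ 1 := min_le_left _ _
    have htb : t * (|mu| * ‖g‖ + δ) ≤ ‖f k₀‖ := by
      calc t * (|mu| * ‖g‖ + δ)
          ≤ (‖f k₀‖ / (|mu| * ‖g‖ + δ)) * (|mu| * ‖g‖ + δ) :=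
            mul_le_mul_of_nonneg_right (min_le_right _ _) hden.le
        _ = ‖f k₀‖ := div_mul_cancel₀ _ hden.ne'
    have htmg : 0 ≤ t * (|mu| * ‖g‖) :=
      mul_nonneg htpos.le (mul_nonneg (abs_nonneg mu) (norm_nonneg g))
    have hnn : 0 ≤ ‖f k₀‖ - t * δ := by nlinarith
    have hbound : ‖f + (t * mu) • g‖ ≤ ‖f k₀‖ - t * δ := by
      refine (ContinuousMap.norm_le _ hnn).2 ?_
      intro k
      rcases eq_or_ne k k₀ with rfl | h
      · have heq : f k + (t * mu) • g k
            = (1 - t) • f k + t • (f k + mu • g k) := by module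
        have hval : ‖f k + mu • g k‖ = ‖f k‖ - δ := by rw [hδ]; ring
        calc ‖(f + (t * mu) • g) k‖ = ‖f k + (t * mu) • g k‖ := by
              simp [ContinuousMap.add_apply]
          _ = ‖(1 - t) • f k + t • (f k + mu • g k)‖ := by rw [heq]
          _ ≤ ‖(1 - t) • f k‖ + ‖t • (f k + mu • g k)‖ := norm_add_le _ _
          _ = (1 - t) * ‖f k‖ + t * ‖f k + mu • g k‖ := by
              rw [norm_smul, norm_smul, Real.norm_eq_abs, Real.norm_eq_abs,
                abs_of_nonneg (by linarith : (0:ℝ) ≤ 1 - t), abs_of_nonneg htpos.le]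
          _ ≤ ‖f k‖ - t * δ := by rw [hval]; ring_nf; nlinarith
      · have hfk : f k = 0 := hvanish k h
        calc ‖(f + (t * mu) • g) k‖ = ‖(t * mu) • g k‖ := by
              simp [ContinuousMap.add_apply, hfk]
          _ = |t * mu| * ‖g k‖ := by rw [norm_smul, Real.norm_eq_abs]
          _ = t * (|mu| * ‖g k‖) := by
              rw [abs_mul, abs_of_nonneg htpos.le]; ring
          _ ≤ t * (|mu| * ‖g‖) :=
              mul_le_mul_of_nonneg_left
                (mul_le_mul_of_nonneg_left (g.norm_coe_le_norm k) (abs_nonneg mu)) htpos.le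
          _ ≤ ‖f k₀‖ - t * δ := by nlinarith
    have := hg (t * mu)
    rw [hfx] at this
    nlinarith
  have h2 := hls (g k₀) key
  refine (ContinuousMap.norm_le g (norm_nonneg _)).2 ?_
  intro k
  rcases eq_or_ne k k₀ with rfl | h
  · calc ‖g k‖ ≤ ‖g k + lam • f k‖ := h2 lam
      _ = ‖(g + lam • f) k‖ := by simp [ContinuousMap.add_apply]
      _ ≤ ‖g + lam • f‖ := (g + lam • f).norm_coe_le_norm k
  · calc ‖g k‖ = ‖(g + lam • f) k‖ := by
          simp [ContinuousMap.add_apply, hvanish k h]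
      _ ≤ ‖g + lam • f‖ := (g + lam • f).norm_coe_le_norm k
end

section
/- Let K be a compact Hausdorff space and X a real Banach space. If a nonzero f ∈ C(K, X) is a left symmetric point, then there exists an isolated point k₀ of K such that f(k) = 0 for all k ≠ k₀ and f(k₀) is a nonzero left symmetric point of X. -/
open Topology Filter

/-- If a nonzero `f ∈ C(K, X)` is a left symmetric point, then `f` is supported at a single
isolated point `k₀` and `f k₀` is a nonzero left symmetric point of `X`. -/
theorem indicator_of_left_symmetric {K X : Type*} [TopologicalSpace K] [CompactSpace K]
    [T2Space K] [NormedAddCommGroup X] [NormedSpace ℝ X] [CompleteSpace X]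
    (f : C(K, X)) (hf : f ≠ 0)
    (hls : ∀ g : C(K, X), (∀ lam : ℝ, ‖f + lam • g‖ ≥ ‖f‖) →
      ∀ lam : ℝ, ‖g + lam • f‖ ≥ ‖g‖) :
    ∃ k₀ : K, 𝓝[≠] k₀ = ⊥ ∧ (∀ k : K, k ≠ k₀ → f k = 0) ∧ f k₀ ≠ 0 ∧
      (∀ y : X, (∀ lam : ℝ, ‖f k₀ + lam • y‖ ≥ ‖f k₀‖) →
        ∀ lam : ℝ, ‖y + lam • f k₀‖ ≥ ‖y‖) := by
  classical
  have hK : Nonempty K := by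
    by_contra h
    rw [not_nonempty_iff] at h
    exact hf (ContinuousMap.ext fun k => isEmptyElim k)
  have hfn : 0 < ‖f‖ := norm_pos_iff.mpr hf
  -- pick a norm attaining point
  obtain ⟨k0, -, hk0⟩ := isCompact_univ.exists_isMaxOn Set.univ_nonempty
    (continuous_norm.comp f.continuous).continuousOn
  have hk0n : ‖f k0‖ = ‖f‖ := le_antisymm (f.norm_coe_le_norm k0)
    ((ContinuousMap.norm_le f (norm_nonneg _)).mpr fun k => hk0 (Set.mem_univ k))
  have hfk0 : f k0 ≠ 0 := by
    intro h
    rw [h, norm_zero] at hk0n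
    exact absurd hk0n.symm (ne_of_gt hfn)
  -- Step 1: f vanishes away from k0
  have hzero : ∀ k, k ≠ k0 → f k = 0 := by
    intro k1 hk1
    by_contra hfk1
    have hfk1n : 0 < ‖f k1‖ := norm_pos_iff.mpr hfk1
    set ε : ℝ := ‖f k1‖ / 2 with hε
    have hεpos : 0 < ε := by positivity
    set U : Set K := {k | ‖f k - f k1‖ < ε} ∩ {k0}ᶜ with hU
    have hUopen : IsOpen U :=
      (isOpen_lt ((f.continuous.sub continuous_const).norm) continuous_const).inter
        isClosed_singleton.isOpen_compl
    have hk1U : k1 ∈ U := by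
      constructor
      · simp [hεpos]
      · simpa using hk1
    obtain ⟨φ, hφ0, hφ1, hφ01⟩ := exists_continuous_zero_one_of_isClosed
      hUopen.isClosed_compl isClosed_singleton (by
        rw [Set.disjoint_singleton_right]
        simpa using hk1U)
    set g : C(K, X) := ⟨fun k => φ k • f k1, (map_continuous φ).smul continuous_const⟩ with hg
    have hk0U : k0 ∉ U := fun h => h.2 rfl
    have hφk0 : φ k0 = 0 := hφ0 hk0U
    have hfg : ∀ lam : ℝ, ‖f + lam • g‖ ≥ ‖f‖ := by
      intro lam
      have hval : (f + lam • g) k0 = f k0 := by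
        simp [hg, hφk0]
      calc ‖f‖ = ‖f k0‖ := hk0n.symm
        _ = ‖(f + lam • g) k0‖ := by rw [hval]
        _ ≤ ‖f + lam • g‖ := ContinuousMap.norm_coe_le_norm _ _
    set t : ℝ := min (1/2) (‖f k1‖ / (2 * ‖f‖)) with ht
    have htpos : 0 < t := lt_min (by norm_num) (by positivity)
    have hthalf : t ≤ 1/2 := min_le_left _ _
    have htf : t * ‖f‖ ≤ ε := by
      have h1 : t ≤ ‖f k1‖ / (2 * ‖f‖) := min_le_right _ _
      have := mul_le_mul_of_nonneg_right h1 (le_of_lt hfn)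
      rwa [div_mul_eq_mul_div, mul_comm (2:ℝ) ‖f‖, ← div_div,
        mul_div_assoc, div_self (ne_of_gt hfn), mul_one] at this
    set c : ℝ := ‖f k1‖ - t * ε with hc
    have hbound : ‖g + (-t) • f‖ ≤ c := by
      apply (ContinuousMap.norm_le _ (by nlinarith)).mpr
      intro k
      have hval : (g + (-t) • f) k = φ k • f k1 + (-t) • f k := by simp [hg]
      rw [hval]
      by_cases hkU : k ∈ U
      · have hrw : φ k • f k1 + (-t) • f k = (φ k - t) • f k1 + t • (f k1 - f k) := by
          module
        rw [hrw]
        have h1 : |φ k - t| ≤ 1 - t := by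
          have h01 := hφ01 k
          rw [abs_le]
          constructor <;> linarith [h01.1, h01.2]
        have h2 : ‖f k1 - f k‖ ≤ ε := by
          rw [norm_sub_rev]
          exact le_of_lt hkU.1
        calc ‖(φ k - t) • f k1 + t • (f k1 - f k)‖
            ≤ ‖(φ k - t) • f k1‖ + ‖t • (f k1 - f k)‖ := norm_add_le _ _
          _ = |φ k - t| * ‖f k1‖ + |t| * ‖f k1 - f k‖ := by
              rw [norm_smul, norm_smul, Real.norm_eq_abs, Real.norm_eq_abs]
          _ ≤ (1 - t) * ‖f k1‖ + t * ε := by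
              apply add_le_add
              · exact mul_le_mul_of_nonneg_right h1 (norm_nonneg _)
              · rw [abs_of_pos htpos]
                exact mul_le_mul_of_nonneg_left h2 (le_of_lt htpos)
          _ = c := by rw [hc, hε]; ring
      · have hφk : φ k = 0 := hφ0 hkU
        rw [hφk, zero_smul, zero_add, norm_smul, Real.norm_eq_abs,
          abs_neg, abs_of_pos htpos]
        have : t * ‖f k‖ ≤ t * ‖f‖ :=
          mul_le_mul_of_nonneg_left (f.norm_coe_le_norm k) (le_of_lt htpos)
        nlinarith
    have hgk1 : ‖g‖ ≥ ‖f k1‖ := by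
      have : g k1 = f k1 := by
        simp [hg, hφ1 rfl]
      calc ‖f k1‖ = ‖g k1‖ := by rw [this]
        _ ≤ ‖g‖ := ContinuousMap.norm_coe_le_norm _ _
    have := hls g hfg (-t)
    nlinarith
  -- Step 2: k0 is isolated
  have hiso : 𝓝[≠] k0 = ⊥ := by
    by_contra h
    have hne : (𝓝[≠] k0).NeBot := neBot_iff.mpr h
    have h1 : Tendsto f (𝓝[≠] k0) (𝓝 (f k0)) :=
      (f.continuous.tendsto k0).mono_left nhdsWithin_le_nhds
    have h2 : Tendsto f (𝓝[≠] k0) (𝓝 0) := by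
      apply Tendsto.congr' _ tendsto_const_nhds
      filter_upwards [self_mem_nhdsWithin] with k hk
      exact (hzero k hk).symm
    exact hfk0 (tendsto_nhds_unique h1 h2)
  refine ⟨k0, hiso, hzero, hfk0, ?_⟩
  intro y hy lam
  have hopen : IsOpen ({k0} : Set K) := (isOpen_singleton_iff_punctured_nhds k0).mpr hiso
  have hcont : Continuous (fun k => if k = k0 then y else (0 : X)) := by
    rw [continuous_iff_continuousAt]
    intro k
    by_cases hk : k = k0
    · subst hk
      have heq : (fun k' => if k' = k then y else (0 : X)) =ᶠ[𝓝 k] fun _ => y := by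
        filter_upwards [hopen.mem_nhds rfl] with k' hk'
        simp [Set.mem_singleton_iff.mp hk']
      exact (continuousAt_congr heq).mpr continuousAt_const
    · have heq : (fun k' => if k' = k0 then y else (0 : X)) =ᶠ[𝓝 k] fun _ => (0 : X) := by
        filter_upwards [isClosed_singleton.isOpen_compl.mem_nhds
          (by simpa using hk : k ∈ ({k0} : Set K)ᶜ)] with k' hk'
        have : k' ≠ k0 := by simpa using hk'
        simp [this]
      exact (continuousAt_congr heq).mpr continuousAt_const
  set g : C(K, X) := ⟨fun k => if k = k0 then y else 0, hcont⟩ with hg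
  have hfy : ∀ lam' : ℝ, ‖f + lam' • g‖ ≥ ‖f‖ := by
    intro lam'
    have hval : (f + lam' • g) k0 = f k0 + lam' • y := by simp [hg]
    calc ‖f‖ = ‖f k0‖ := hk0n.symm
      _ ≤ ‖f k0 + lam' • y‖ := hy lam'
      _ = ‖(f + lam' • g) k0‖ := by rw [hval]
      _ ≤ ‖f + lam' • g‖ := ContinuousMap.norm_coe_le_norm _ _
  have hgf := hls g hfy lam
  have h1 : ‖g‖ ≥ ‖y‖ := by
    have : g k0 = y := by simp [hg]
    calc ‖y‖ = ‖g k0‖ := by rw [this]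
      _ ≤ ‖g‖ := ContinuousMap.norm_coe_le_norm _ _
  have h2 : ‖g + lam • f‖ ≤ ‖y + lam • f k0‖ := by
    apply (ContinuousMap.norm_le _ (norm_nonneg _)).mpr
    intro k
    by_cases hk : k = k0
    · subst hk; simp [hg]
    · have : (g + lam • f) k = 0 := by simp [hg, hk, hzero k hk]
      rw [this, norm_zero]; exact norm_nonneg _
  linarith
end

section
/- Let K be a compact, sequentially compact Hausdorff space and X a complex Banach space. A nonzero f ∈ C(K, X) is a left symmetric point if and only if f = f(k₀)·χ_{k₀} for some isolated point k₀ of K, where f(k₀) is a nonzero left symmetric point of X. -/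
open Topology Filter Set

/-- For `K` compact, sequentially compact Hausdorff and `X` a complex Banach space, a nonzero
`f ∈ C(K, X)` is a left symmetric point iff `f = f(k₀)·χ_{k₀}` for some isolated point `k₀`,
where `f k₀` is a nonzero left symmetric point of `X`. -/
theorem left_symmetric_iff_complex {K X : Type*} [TopologicalSpace K] [CompactSpace K]
    [SeqCompactSpace K] [T2Space K]
    [NormedAddCommGroup X] [NormedSpace ℂ X] [CompleteSpace X]
    (f : C(K, X)) (hf : f ≠ 0) :
    (∀ g : C(K, X), (∀ lam : ℂ, ‖f + lam • g‖ ≥ ‖f‖) →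
        ∀ lam : ℂ, ‖g + lam • f‖ ≥ ‖g‖) ↔
      ∃ k₀ : K, 𝓝[≠] k₀ = ⊥ ∧ (∀ k : K, k ≠ k₀ → f k = 0) ∧ f k₀ ≠ 0 ∧
        (∀ y : X, (∀ lam : ℂ, ‖f k₀ + lam • y‖ ≥ ‖f k₀‖) →
          ∀ lam : ℂ, ‖y + lam • f k₀‖ ≥ ‖y‖) := by
  classical
  have hnorm_le : ∀ (h : C(K, X)) (C : ℝ), 0 ≤ C → (∀ k, ‖h k‖ ≤ C) → ‖h‖ ≤ C :=
    fun h C hC hk => (ContinuousMap.norm_le h hC).mpr hk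
  constructor
  · intro hsym
    have hK : Nonempty K := by
      by_contra h
      rw [not_nonempty_iff] at h
      exact hf (ContinuousMap.ext fun k => isEmptyElim k)
    have hfpos : (0:ℝ) < ‖f‖ := norm_pos_iff.mpr hf
    obtain ⟨k₀, -, hk₀max⟩ := isCompact_univ.exists_isMaxOn univ_nonempty
      (continuous_norm.comp f.continuous).continuousOn
    have hattain : ‖f k₀‖ = ‖f‖ := le_antisymm (f.norm_coe_le_norm k₀)
      (hnorm_le f _ (norm_nonneg _) fun k => hk₀max (mem_univ k))
    have hfk₀ : f k₀ ≠ 0 := by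
      intro h
      rw [h, norm_zero] at hattain
      linarith
    have hzero : ∀ k, k ≠ k₀ → f k = 0 := by
      intro k₁ hk₁
      by_contra hne
      obtain ⟨φ, hφ0, hφ1, hφm⟩ := exists_continuous_zero_one_of_isClosed
        (isClosed_singleton (x := k₀)) (isClosed_singleton (x := k₁))
        (Set.disjoint_singleton.mpr (Ne.symm hk₁))
      have hφ0' : φ k₀ = 0 := hφ0 (Set.mem_singleton k₀)
      have hφ1' : φ k₁ = 1 := hφ1 (Set.mem_singleton k₁)
      set g : C(K, X) := ⟨fun k => φ k • f k, φ.continuous.smul f.continuous⟩ with hgdef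
      have hgapp : ∀ k, g k = φ k • f k := fun k => rfl
      have hfg : ∀ lam : ℂ, ‖f + lam • g‖ ≥ ‖f‖ := by
        intro lam
        have h1 : (f + lam • g) k₀ = f k₀ := by
          simp [hgapp, hφ0']
        calc ‖f‖ = ‖(f + lam • g) k₀‖ := by rw [h1, hattain]
          _ ≤ ‖f + lam • g‖ := ContinuousMap.norm_coe_le_norm _ _
      have hgf := hsym g hfg
      have hgk₁ : ‖g k₁‖ = ‖f k₁‖ := by simp [hgapp, hφ1']
      have hc : 0 < ‖g‖ := by
        have h1 : 0 < ‖g k₁‖ := by rw [hgk₁]; exact norm_pos_iff.mpr hne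
        exact h1.trans_le (g.norm_coe_le_norm k₁)
      set c := ‖g‖ with hcdef
      set t := c / (2 * ‖f‖) with htdef
      have ht0 : 0 < t := by positivity
      have htf : t * ‖f‖ = c / 2 := by
        rw [htdef]; field_simp
      have hbound := hgf (-(t : ℂ))
      obtain ⟨k₂, -, hk₂max⟩ := isCompact_univ.exists_isMaxOn univ_nonempty
        (continuous_norm.comp (g + (-(t:ℂ)) • f).continuous).continuousOn
      have happ : ∀ k, (g + (-(t:ℂ)) • f) k = (φ k - t) • f k := by
        intro k
        have hcs : (-(t:ℂ)) • f k = (-t : ℝ) • f k := by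
          rw [show (-(t:ℂ)) = ((-t : ℝ) : ℂ) by push_cast; ring, Complex.coe_smul]
        calc (g + (-(t:ℂ)) • f) k = φ k • f k + (-(t:ℂ)) • f k := by simp [hgapp]
          _ = φ k • f k + (-t : ℝ) • f k := by rw [hcs]
          _ = (φ k - t) • f k := by rw [sub_smul, neg_smul, ← sub_eq_add_neg]
      have hlt : ‖g + (-(t:ℂ)) • f‖ < c := by
        have hle : ‖g + (-(t:ℂ)) • f‖ ≤ ‖(φ k₂ - t) • f k₂‖ := by
          rw [← happ k₂]
          exact hnorm_le _ _ (norm_nonneg _) fun k => by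
            simpa [happ] using hk₂max (mem_univ k)
        refine hle.trans_lt ?_
        rw [norm_smul, Real.norm_eq_abs]
        have hp0 : 0 ≤ φ k₂ := (hφm k₂).1
        have hgk₂ : φ k₂ * ‖f k₂‖ ≤ c := by
          have h1 := g.norm_coe_le_norm k₂
          rwa [hgapp, norm_smul, Real.norm_eq_abs, abs_of_nonneg hp0] at h1
        have hfk₂ : ‖f k₂‖ ≤ ‖f‖ := f.norm_coe_le_norm k₂
        rcases eq_or_lt_of_le (norm_nonneg (f k₂)) with hm | hm
        · rw [← hm, mul_zero]; exact hc
        · rcases le_or_gt (φ k₂) t with hpt | hpt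
          · have habs : |φ k₂ - t| ≤ t := by
              rw [abs_sub_comm, abs_of_nonneg (by linarith)]; linarith
            calc |φ k₂ - t| * ‖f k₂‖ ≤ t * ‖f‖ :=
                  mul_le_mul habs hfk₂ (norm_nonneg _) ht0.le
              _ = c / 2 := htf
              _ < c := by linarith
          · rw [abs_of_pos (by linarith)]
            nlinarith [mul_pos ht0 hm]
      linarith [hbound]
    have hiso : 𝓝[≠] k₀ = ⊥ := by
      by_contra h
      haveI : (𝓝[≠] k₀).NeBot := ⟨h⟩
      have h1 : Tendsto f (𝓝[≠] k₀) (𝓝 (f k₀)) :=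
        (f.continuous.tendsto k₀).mono_left nhdsWithin_le_nhds
      have h2 : Tendsto f (𝓝[≠] k₀) (𝓝 0) := by
        refine Tendsto.congr' ?_ tendsto_const_nhds
        filter_upwards [self_mem_nhdsWithin] with k hk
        exact (hzero k hk).symm
      exact hfk₀ (tendsto_nhds_unique h1 h2)
    refine ⟨k₀, hiso, hzero, hfk₀, ?_⟩
    intro y hy lam
    have hopen : IsOpen ({k₀} : Set K) := (isOpen_singleton_iff_punctured_nhds k₀).mpr hiso
    have hfront : frontier ({k₀} : Set K) = ∅ :=
      IsClopen.frontier_eq ⟨isClosed_singleton, hopen⟩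
    set g : C(K, X) := ⟨({k₀} : Set K).piecewise (fun _ => y) (fun _ => 0),
      Continuous.piecewise (by rw [hfront]; simp) continuous_const continuous_const⟩ with hgdef
    have hgk₀ : g k₀ = y :=
      Set.piecewise_eq_of_mem ({k₀} : Set K) (fun _ => y) (fun _ => 0) (Set.mem_singleton k₀)
    have hgk : ∀ k, k ≠ k₀ → g k = 0 := fun k hk =>
      Set.piecewise_eq_of_notMem ({k₀} : Set K) (fun _ => y) (fun _ => 0) hk
    have hfnorm : ‖f‖ = ‖f k₀‖ := le_antisymm
      (hnorm_le f _ (norm_nonneg _) fun k => by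
        by_cases hk : k = k₀
        · rw [hk]
        · rw [hzero k hk, norm_zero]; exact norm_nonneg _)
      (f.norm_coe_le_norm k₀)
    have hfg : ∀ lam' : ℂ, ‖f + lam' • g‖ ≥ ‖f‖ := by
      intro lam'
      have h1 : (f + lam' • g) k₀ = f k₀ + lam' • y := by simp [hgk₀]
      calc ‖f‖ = ‖f k₀‖ := hfnorm
        _ ≤ ‖f k₀ + lam' • y‖ := hy lam'
        _ = ‖(f + lam' • g) k₀‖ := by rw [h1]
        _ ≤ ‖f + lam' • g‖ := ContinuousMap.norm_coe_le_norm _ _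
    have h2 := hsym g hfg lam
    have h3 : ‖g + lam • f‖ ≤ ‖y + lam • f k₀‖ := by
      apply hnorm_le _ _ (norm_nonneg _)
      intro k
      by_cases hk : k = k₀
      · subst hk
        have h4 : (g + lam • f) k = g k + lam • f k := by simp
        rw [h4, hgk₀]
      · have h4 : (g + lam • f) k = 0 := by simp [hgk k hk, hzero k hk]
        rw [h4, norm_zero]; exact norm_nonneg _
    calc ‖y‖ = ‖g k₀‖ := by rw [hgk₀]
      _ ≤ ‖g‖ := g.norm_coe_le_norm k₀
      _ ≤ ‖g + lam • f‖ := h2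
      _ ≤ ‖y + lam • f k₀‖ := h3
  · rintro ⟨k₀, hiso, hzero, hne, hsymX⟩ g hfg lam
    have hfpos : 0 < ‖f k₀‖ := norm_pos_iff.mpr hne
    have hfnorm : ‖f‖ = ‖f k₀‖ := le_antisymm
      (hnorm_le f _ (norm_nonneg _) fun k => by
        by_cases hk : k = k₀
        · rw [hk]
        · rw [hzero k hk, norm_zero]; exact norm_nonneg _)
      (f.norm_coe_le_norm k₀)
    have key : ∀ mu : ℂ, ‖f k₀ + mu • g k₀‖ ≥ ‖f k₀‖ := by
      intro mu
      by_contra hcon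
      push_neg at hcon
      set δ := ‖f k₀‖ - ‖f k₀ + mu • g k₀‖ with hδdef
      have hδ : 0 < δ := sub_pos.mpr hcon
      set t := min 1 (‖f k₀‖ / (2 * (‖mu‖ * ‖g‖ + 1))) with htdef
      have ht0 : 0 < t := lt_min one_pos (by positivity)
      have ht1 : t ≤ 1 := min_le_left _ _
      have ht2 : t ≤ ‖f k₀‖ / (2 * (‖mu‖ * ‖g‖ + 1)) := min_le_right _ _
      have htmug : t * (‖mu‖ * ‖g‖) < ‖f k₀‖ := by
        have h1 : t * (‖mu‖ * ‖g‖ + 1) ≤ ‖f k₀‖ / 2 := by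
          calc t * (‖mu‖ * ‖g‖ + 1)
              ≤ (‖f k₀‖ / (2 * (‖mu‖ * ‖g‖ + 1))) * (‖mu‖ * ‖g‖ + 1) :=
                mul_le_mul_of_nonneg_right ht2 (by positivity)
            _ = ‖f k₀‖ / 2 := by field_simp
        have h2 : t * (‖mu‖ * ‖g‖ + 1) = t * (‖mu‖ * ‖g‖) + t := by ring
        linarith
      have hb := hfg ((t : ℂ) * mu)
      have hk₀val : ‖f k₀ + ((t:ℂ) * mu) • g k₀‖ ≤ ‖f k₀‖ - t * δ := by
        have heq : f k₀ + ((t:ℂ) * mu) • g k₀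
            = (1 - (t:ℂ)) • f k₀ + (t:ℂ) • (f k₀ + mu • g k₀) := by
          rw [smul_add, smul_smul, sub_smul, one_smul]
          abel
        rw [heq]
        have hn1 : ‖(1 - (t:ℂ))‖ = 1 - t := by
          rw [show (1 - (t:ℂ)) = ((1 - t : ℝ) : ℂ) by push_cast; ring,
            Complex.norm_real, Real.norm_eq_abs, abs_of_nonneg (by linarith)]
        have hn2 : ‖((t:ℝ):ℂ)‖ = t := by
          rw [Complex.norm_real, Real.norm_eq_abs, abs_of_pos ht0]
        calc ‖(1 - (t:ℂ)) • f k₀ + (t:ℂ) • (f k₀ + mu • g k₀)‖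
            ≤ ‖(1 - (t:ℂ)) • f k₀‖ + ‖(t:ℂ) • (f k₀ + mu • g k₀)‖ := norm_add_le _ _
          _ = (1 - t) * ‖f k₀‖ + t * ‖f k₀ + mu • g k₀‖ := by
              rw [norm_smul, norm_smul, hn1, hn2]
          _ = ‖f k₀‖ - t * δ := by rw [hδdef]; ring
      have hlt : ‖f + ((t:ℂ) * mu) • g‖ < ‖f‖ := by
        rw [hfnorm]
        set C := max (‖f k₀‖ - t * δ) (t * (‖mu‖ * ‖g‖)) with hC
        have hC0 : 0 ≤ C := le_max_of_le_right (by positivity)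
        have hCle : ‖f + ((t:ℂ)*mu) • g‖ ≤ C := by
          apply hnorm_le _ _ hC0
          intro k
          by_cases hk : k = k₀
          · subst hk
            have h4 : (f + ((t:ℂ)*mu) • g) k = f k + ((t:ℂ)*mu) • g k := by simp
            rw [h4]
            exact le_trans hk₀val (le_max_left _ _)
          · have h4 : (f + ((t:ℂ)*mu) • g) k = ((t:ℂ)*mu) • g k := by
              simp [hzero k hk]
            rw [h4, norm_smul]
            have h5 : ‖(t:ℂ)*mu‖ = t * ‖mu‖ := by
              rw [norm_mul, Complex.norm_real, Real.norm_eq_abs, abs_of_pos ht0]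
            rw [h5]
            calc t * ‖mu‖ * ‖g k‖ ≤ t * ‖mu‖ * ‖g‖ :=
                  mul_le_mul_of_nonneg_left (g.norm_coe_le_norm k) (by positivity)
              _ = t * (‖mu‖ * ‖g‖) := by ring
              _ ≤ C := le_max_right _ _
        have hClt : C < ‖f k₀‖ := max_lt (by nlinarith) htmug
        exact hCle.trans_lt hClt
      linarith [hb]
    have hgk := hsymX (g k₀) key
    apply hnorm_le _ _ (norm_nonneg _)
    intro k
    by_cases hk : k = k₀
    · subst hk
      calc ‖g k‖ ≤ ‖g k + lam • f k‖ := hgk lam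
        _ = ‖(g + lam • f) k‖ := by simp
        _ ≤ ‖g + lam • f‖ := ContinuousMap.norm_coe_le_norm _ _
    · calc ‖g k‖ = ‖(g + lam • f) k‖ := by simp [hzero k hk]
        _ ≤ ‖g + lam • f‖ := ContinuousMap.norm_coe_le_norm _ _
end

section
/- Let K be a compact Hausdorff metric space with no isolated points and X a Banach space. Then zero is the only left symmetric point in C(K, X). -/
open Topology Filter

/-!
Let `f ≠ 0` attain its norm at `k₀`, and put `g k = φ(k) f(k)` with `φ = min (dist · k₀) 1`.
Every `f + λ g` agrees with `f` at `k₀`, so `f ⊥_B g`. Since `k₀` is not isolated, `g ≠ 0`;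
and subtracting a small multiple `c f` from `g` shrinks `g` uniformly where `‖g‖` is near its
maximum (there `φ ≥ c`), while elsewhere `‖g - c f‖` stays well below `‖g‖`. Hence `g ⊥_B f`
fails.
-/

/-- Birkhoff–James orthogonality `x ⊥_B y`. -/
def BirkhoffOrthogonal (𝕜 : Type*) {E : Type*} [NormedField 𝕜] [SeminormedAddCommGroup E]
    [NormedSpace 𝕜 E] (x y : E) : Prop :=
  ∀ lam : 𝕜, ‖x‖ ≤ ‖x + lam • y‖

lemma abs_sub_mul_le_sub {a b c M N : ℝ} (ha : 0 ≤ a) (ha1 : a ≤ 1) (hb : 0 ≤ b) (hbM : b ≤ M)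
    (hab : a * b ≤ N) (hc : 0 ≤ c) (hcM : 4 * c * M ≤ N) (hNM : N ≤ M) :
    |a - c| * b ≤ N - c * N / 2 := by
  rcases le_or_gt (a * b) (N / 2) with hsmall | hlarge
  · calc |a - c| * b ≤ (a + c) * b := by
          gcongr
          exact abs_sub_le_iff.mpr ⟨by linarith, by linarith⟩
      _ ≤ N - c * N / 2 := by nlinarith
  · have hca : c ≤ a := by nlinarith
    have hNb : N / 2 ≤ b := by nlinarith
    rw [abs_of_nonneg (sub_nonneg.mpr hca)]
    nlinarith [mul_le_mul_of_nonneg_left hNb hc]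

namespace ContinuousMap

variable {𝕜 K X : Type*} [RCLike 𝕜] [TopologicalSpace K] [CompactSpace K]
  [NormedAddCommGroup X] [NormedSpace 𝕜 X]

lemma exists_norm_apply_eq_norm [Nonempty K] (f : C(K, X)) : ∃ k, ‖f k‖ = ‖f‖ := by
  obtain ⟨k, -, hk⟩ := isCompact_univ.exists_isMaxOn Set.univ_nonempty
    (continuous_norm.comp f.continuous).continuousOn
  exact ⟨k, le_antisymm (f.norm_coe_le_norm k) ((f.norm_le (norm_nonneg _)).mpr
    fun k' ↦ hk (Set.mem_univ k'))⟩

lemma birkhoffOrthogonal_of_apply_eq_zero {f g : C(K, X)} {k : K} (hf : ‖f k‖ = ‖f‖)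
    (hg : g k = 0) : BirkhoffOrthogonal 𝕜 f g := fun lam ↦ by
  simpa [hf, hg] using (f + lam • g).norm_coe_le_norm k

lemma not_birkhoffOrthogonal_of_apply_eq_smul {f g : C(K, X)} {φ : K → ℝ}
    (hφ0 : ∀ k, 0 ≤ φ k) (hφ1 : ∀ k, φ k ≤ 1) (hg : ∀ k, g k = (φ k : 𝕜) • f k) (hg0 : g ≠ 0) :
    ¬ BirkhoffOrthogonal 𝕜 g f := by
  have hgf : ∀ k, ‖g k‖ = φ k * ‖f k‖ := fun k ↦ by
    rw [hg, norm_smul, RCLike.norm_ofReal, abs_of_nonneg (hφ0 k)]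
  have hN : 0 < ‖g‖ := norm_pos_iff.mpr hg0
  have hNM : ‖g‖ ≤ ‖f‖ := (g.norm_le (norm_nonneg _)).mpr fun k ↦ by
    rw [hgf]
    exact (mul_le_of_le_one_left (norm_nonneg _) (hφ1 k)).trans (f.norm_coe_le_norm k)
  have hM : 0 < ‖f‖ := hN.trans_le hNM
  set c := ‖g‖ / (4 * ‖f‖)
  have hc : 0 < c := by positivity
  have hcM : 4 * c * ‖f‖ = ‖g‖ := by simp only [c]; field_simp
  intro horth
  have hle : ‖g + ((-c : ℝ) : 𝕜) • f‖ ≤ ‖g‖ - c * ‖g‖ / 2 := by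
    refine (norm_le _ (by nlinarith)).mpr fun k ↦ ?_
    have happ : (g + ((-c : ℝ) : 𝕜) • f) k = ((φ k - c : ℝ) : 𝕜) • f k := by
      simp [hg, sub_eq_add_neg, add_smul]
    rw [happ, norm_smul, RCLike.norm_ofReal]
    exact abs_sub_mul_le_sub (hφ0 k) (hφ1 k) (norm_nonneg _) (f.norm_coe_le_norm k)
      (hgf k ▸ g.norm_coe_le_norm k) hc.le hcM.le hNM
  nlinarith [horth ((-c : ℝ) : 𝕜)]

end ContinuousMap

lemma ContinuousAt.exists_ne_apply_ne {K Y : Type*} [TopologicalSpace K] [TopologicalSpace Y]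
    [T1Space Y] {f : K → Y} {k : K} {y : Y} [(𝓝[≠] k).NeBot] (hf : ContinuousAt f k)
    (hfk : f k ≠ y) : ∃ k' ≠ k, f k' ≠ y := by
  have : ∀ᶠ k' in 𝓝[≠] k, k' ≠ k ∧ f k' ≠ y :=
    eventually_mem_nhdsWithin.and (nhdsWithin_le_nhds (hf.eventually_ne hfk))
  exact this.exists

theorem left_symmetric_eq_zero_of_no_isolated_general {𝕜 K X : Type*} [RCLike 𝕜] [MetricSpace K]
    [CompactSpace K] (hK : ∀ k : K, (𝓝[≠] k).NeBot)
    [NormedAddCommGroup X] [NormedSpace 𝕜 X] :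
    ∀ f : C(K, X),
      (∀ g : C(K, X), (∀ lam : 𝕜, ‖f + lam • g‖ ≥ ‖f‖) →
        ∀ lam : 𝕜, ‖g + lam • f‖ ≥ ‖g‖) → f = 0 := by
  intro f hf
  by_contra hf0
  obtain ⟨k, -⟩ := DFunLike.ne_iff.mp hf0
  have : Nonempty K := ⟨k⟩
  obtain ⟨k₀, hk₀⟩ := f.exists_norm_apply_eq_norm
  have hfk₀ : f k₀ ≠ 0 := norm_ne_zero_iff.mp (hk₀ ▸ norm_ne_zero_iff.mpr hf0)
  have := hK k₀
  obtain ⟨k₁, hk₁, hfk₁⟩ := f.continuous.continuousAt.exists_ne_apply_ne hfk₀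
  let φ : K → ℝ := fun k ↦ min (dist k k₀) 1
  let g : C(K, X) := ⟨fun k ↦ (φ k : 𝕜) • f k, by fun_prop⟩
  have hg0 : g ≠ 0 := DFunLike.ne_iff.mpr
    ⟨k₁, by simp [g, φ, hfk₁, (lt_min (dist_pos.mpr hk₁) one_pos).ne']⟩
  exact ContinuousMap.not_birkhoffOrthogonal_of_apply_eq_smul (fun _ ↦ by positivity)
    (fun _ ↦ min_le_right _ _) (fun _ ↦ rfl) hg0
    (hf g (ContinuousMap.birkhoffOrthogonal_of_apply_eq_zero hk₀ (by simp [g, φ])))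

/-- If `K` is a compact metric space with no isolated points, then `0` is the only left
symmetric point of `C(K, X)`. -/
theorem left_symmetric_eq_zero_of_no_isolated {𝕜 K X : Type*} [RCLike 𝕜] [MetricSpace K]
    [CompactSpace K] (hK : ∀ k : K, (𝓝[≠] k).NeBot)
    [NormedAddCommGroup X] [NormedSpace 𝕜 X] [CompleteSpace X] :
    ∀ f : C(K, X),
      (∀ g : C(K, X), (∀ lam : 𝕜, ‖f + lam • g‖ ≥ ‖f‖) →
        ∀ lam : 𝕜, ‖g + lam • f‖ ≥ ‖g‖) → f = 0 :=
  left_symmetric_eq_zero_of_no_isolated_general hK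
end

section
/- Let K be a compact Hausdorff space and X a Banach space having no nonzero left symmetric points. Then zero is the only left symmetric point in C(K, X). -/
/-- If the Banach space `X` has no nonzero left symmetric points, then `0` is the only left
symmetric point of `C(K, X)` for `K` compact Hausdorff. -/
theorem left_symmetric_eq_zero_of_no_left_symmetric {𝕜 K X : Type*} [RCLike 𝕜]
    [TopologicalSpace K] [CompactSpace K] [T2Space K]
    [NormedAddCommGroup X] [NormedSpace 𝕜 X] [CompleteSpace X]
    (hX : ∀ x : X, (∀ y : X, (∀ lam : 𝕜, ‖x + lam • y‖ ≥ ‖x‖) →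
      ∀ lam : 𝕜, ‖y + lam • x‖ ≥ ‖y‖) → x = 0) :
    ∀ f : C(K, X),
      (∀ g : C(K, X), (∀ lam : 𝕜, ‖f + lam • g‖ ≥ ‖f‖) →
        ∀ lam : 𝕜, ‖g + lam • f‖ ≥ ‖g‖) → f = 0 := by
  intro f hf
  rcases isEmpty_or_nonempty K with hK | hK
  · ext k; exact absurd ⟨k⟩ (not_nonempty_iff.2 hK)
  -- pick a point where the norm of f is attained
  obtain ⟨k₀, -, hk₀⟩ := isCompact_univ.exists_isMaxOn Set.univ_nonempty
    ((continuous_norm.comp f.continuous).continuousOn (s := Set.univ))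
  have hnorm : ‖f‖ = ‖f k₀‖ := by
    refine le_antisymm ((ContinuousMap.norm_le f (norm_nonneg _)).2 ?_)
      (f.norm_coe_le_norm k₀)
    intro k; exact hk₀ (Set.mem_univ k)
  -- f k₀ is a left symmetric point of X
  have hx0 : f k₀ = 0 := by
    refine hX _ (fun y hy lam => ?_)
    by_contra h
    push_neg at h
    set c := ‖y + lam • f k₀‖ with hc
    set M := (c + ‖y‖) / 2 with hM
    have hcM : c < M := by rw [hM]; linarith
    have hMy : M < ‖y‖ := by rw [hM]; linarith
    have hM0 : 0 ≤ M := le_trans (norm_nonneg _) hcM.le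
    set U : Set K := {k | ‖y + lam • f k‖ < M} with hU
    have hUopen : IsOpen U := by
      apply isOpen_lt _ continuous_const
      fun_prop
    have hk₀U : k₀ ∈ U := hcM
    obtain ⟨φ, hφ0, hφ1, hφmem⟩ := exists_continuous_zero_one_of_isClosed
      hUopen.isClosed_compl isClosed_singleton
      (Set.disjoint_singleton_right.2 (by simpa using hk₀U))
    have hφk₀ : φ k₀ = 1 := hφ1 rfl
    set g : C(K, X) := ⟨fun k => ((φ k : ℝ) : 𝕜) • (y + lam • f k) - lam • f k, by
      fun_prop⟩ with hg
    have hgk₀ : g k₀ = y := by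
      simp [hg, hφk₀]
    -- f ⊥_B g
    have hfg : ∀ μ : 𝕜, ‖f + μ • g‖ ≥ ‖f‖ := by
      intro μ
      have : (f + μ • g) k₀ = f k₀ + μ • y := by
        simp [hgk₀]
      calc ‖f‖ = ‖f k₀‖ := hnorm
        _ ≤ ‖f k₀ + μ • y‖ := hy μ
        _ = ‖(f + μ • g) k₀‖ := by rw [this]
        _ ≤ ‖f + μ • g‖ := (f + μ • g).norm_coe_le_norm k₀
    have hgf := hf g hfg lam
    have hyg : ‖y‖ ≤ ‖g‖ := by
      rw [← hgk₀]; exact g.norm_coe_le_norm k₀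
    have hbound : ‖g + lam • f‖ ≤ M := by
      refine (ContinuousMap.norm_le _ hM0).2 (fun k => ?_)
      have : (g + lam • f) k = ((φ k : ℝ) : 𝕜) • (y + lam • f k) := by
        simp [hg]
      rw [this, norm_smul, RCLike.norm_ofReal,
        abs_of_nonneg (hφmem k).1]
      by_cases hk : k ∈ U
      · calc φ k * ‖y + lam • f k‖ ≤ 1 * M :=
            mul_le_mul (hφmem k).2 (le_of_lt hk) (norm_nonneg _) zero_le_one
          _ = M := one_mul M
      · rw [hφ0 hk]
        simpa using hM0
    have : ‖y‖ < ‖y‖ := lt_of_le_of_lt (hyg.trans (hgf.trans hbound)) hMy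
    exact lt_irrefl _ this
  -- conclude f = 0
  ext k
  have : ‖f k‖ ≤ 0 := by
    calc ‖f k‖ ≤ ‖f‖ := f.norm_coe_le_norm k
      _ = ‖f k₀‖ := hnorm
      _ = 0 := by rw [hx0, norm_zero]
  simpa using norm_le_zero_iff.1 this
end

section
/- Let K be a compact Hausdorff space and X a real Banach space. If f ∈ C(K, X) is a nonzero right symmetric point, then ‖f(k)‖ = ‖f‖ for all k ∈ K (i.e., M_f = K); in particular, f is nowhere zero. -/
set_option maxHeartbeats 1000000 in
/-- If a nonzero `f ∈ C(K, X)` is a right symmetric point (`K` compact Hausdorff, `X` real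
Banach), then `f` attains its norm everywhere; in particular `f` is nowhere zero. -/
theorem right_symmetric_attains_norm_everywhere {K X : Type*} [TopologicalSpace K]
    [CompactSpace K] [T2Space K]
    [NormedAddCommGroup X] [NormedSpace ℝ X] [CompleteSpace X]
    (f : C(K, X)) (hf : f ≠ 0)
    (hrs : ∀ g : C(K, X), (∀ lam : ℝ, ‖g + lam • f‖ ≥ ‖g‖) →
      ∀ lam : ℝ, ‖f + lam • g‖ ≥ ‖f‖) :
    ∀ k : K, ‖f k‖ = ‖f‖ ∧ f k ≠ 0 := by
  intro k₀
  have hR : 0 < ‖f‖ := norm_pos_iff.mpr hf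
  have hle : ‖f k₀‖ ≤ ‖f‖ := f.norm_coe_le_norm k₀
  suffices h : ‖f k₀‖ = ‖f‖ by
    refine ⟨h, fun h0 => ?_⟩
    rw [h0, norm_zero] at h
    exact hR.ne h
  by_contra hne
  have hlt : ‖f k₀‖ < ‖f‖ := lt_of_le_of_ne hle hne
  set R := ‖f‖ with hRdef
  set r := ‖f k₀‖ with hrdef
  have hr0 : 0 ≤ r := norm_nonneg _
  set c₁ : ℝ := (2*r + R)/3 with hc₁
  set c₂ : ℝ := (r + 2*R)/3 with hc₂
  have h1 : r < c₁ := by rw [hc₁]; linarith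
  have h2 : c₁ < c₂ := by rw [hc₁, hc₂]; linarith
  have h3 : c₂ < R := by rw [hc₂]; linarith
  have hc₂0 : 0 < c₂ := by rw [hc₂]; linarith
  -- a point where the norm is attained
  have hKne : (Set.univ : Set K).Nonempty := ⟨k₀, trivial⟩
  obtain ⟨k₁, -, hk₁max⟩ := isCompact_univ.exists_isMaxOn hKne
    (f.continuous.norm.continuousOn)
  have hk₁ : ‖f k₁‖ = R := by
    refine le_antisymm (f.norm_coe_le_norm k₁) ?_
    exact (f.norm_le (norm_nonneg _)).mpr (fun k => hk₁max (Set.mem_univ k))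
  -- Urysohn functions
  have hclA : IsClosed {k : K | c₂ ≤ ‖f k‖} :=
    isClosed_le continuous_const f.continuous.norm
  have hclB : IsClosed {k : K | ‖f k‖ ≤ c₁} :=
    isClosed_le f.continuous.norm continuous_const
  have hclC : IsClosed {k : K | c₁ ≤ ‖f k‖} :=
    isClosed_le continuous_const f.continuous.norm
  obtain ⟨χ, hχ0, hχ1, hχm⟩ := exists_continuous_zero_one_of_isClosed hclB hclA
    (by rw [Set.disjoint_left]; intro k hk hk'; simp only [Set.mem_setOf_eq] at hk hk'; linarith)
  obtain ⟨φ, hφ0, hφ1, hφm⟩ := exists_continuous_zero_one_of_isClosed hclC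
    (isClosed_singleton (x := k₀))
    (by rw [Set.disjoint_left]; intro k hk hk'; simp only [Set.mem_setOf_eq] at hk
        rw [Set.mem_singleton_iff] at hk'; subst hk'; linarith)
  -- the unit vector u with f k₀ = r • u
  obtain ⟨u, hu, hfk₀u⟩ : ∃ u : X, ‖u‖ = 1 ∧ f k₀ = r • u := by
    by_cases h : f k₀ = 0
    · refine ⟨R⁻¹ • f k₁, ?_, ?_⟩
      · rw [norm_smul, hk₁, Real.norm_eq_abs, abs_of_pos (inv_pos.mpr hR),
          inv_mul_cancel₀ hR.ne']
      · have : r = 0 := by rw [hrdef, h, norm_zero]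
        rw [h, this, zero_smul]
    · have hr : r ≠ 0 := by rw [hrdef]; exact norm_ne_zero_iff.mpr h
      refine ⟨r⁻¹ • f k₀, ?_, ?_⟩
      · rw [norm_smul, Real.norm_eq_abs, abs_of_pos (inv_pos.mpr (hr0.lt_of_ne' hr)),
          ← hrdef, inv_mul_cancel₀ hr]
      · rw [smul_smul, mul_inv_cancel₀ hr, one_smul]
  -- the function g
  set g : C(K, X) := ⟨fun k => (-(χ k)) • f k + (R * φ k) • u, by fun_prop⟩ with hg
  have hgapp : ∀ k, g k = (-(χ k)) • f k + (R * φ k) • u := fun k => rfl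
  -- χ and φ values at special points
  have hχk₀ : χ k₀ = 0 := hχ0 (by simp only [Set.mem_setOf_eq, ← hrdef]; linarith)
  have hφk₀ : φ k₀ = 1 := hφ1 rfl
  have hχk₁ : χ k₁ = 1 := hχ1 (by simp only [Set.mem_setOf_eq, hk₁]; linarith)
  have hφk₁ : φ k₁ = 0 := hφ0 (by simp only [Set.mem_setOf_eq, hk₁]; linarith)
  have hgk₀ : g k₀ = R • u := by rw [hgapp, hχk₀, hφk₀]; simp
  have hgk₁ : g k₁ = -(f k₁) := by rw [hgapp, hχk₁, hφk₁]; simp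
  -- pointwise bound on g
  have hgk : ∀ k, ‖g k‖ ≤ R := by
    intro k
    by_cases h : c₁ ≤ ‖f k‖
    · have hφk : φ k = 0 := hφ0 h
      rw [hgapp, hφk, mul_zero, zero_smul, add_zero, norm_smul, Real.norm_eq_abs, abs_neg,
        abs_of_nonneg (hχm k).1]
      have hfk := f.norm_coe_le_norm k
      have := (hχm k).2
      nlinarith [norm_nonneg (f k)]
    · have hχk : χ k = 0 := hχ0 (le_of_not_ge h)
      rw [hgapp, hχk, neg_zero, zero_smul, zero_add, norm_smul, hu, mul_one,
        Real.norm_eq_abs, abs_of_nonneg (mul_nonneg hR.le (hφm k).1)]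
      have := (hφm k).2
      nlinarith
  have hgnorm : ‖g‖ = R := by
    refine le_antisymm ((g.norm_le hR.le).mpr hgk) ?_
    calc R = ‖g k₀‖ := by rw [hgk₀, norm_smul, hu, mul_one, Real.norm_eq_abs, abs_of_pos hR]
    _ ≤ ‖g‖ := g.norm_coe_le_norm k₀
  -- g ⊥_B f
  have horth : ∀ lam : ℝ, ‖g + lam • f‖ ≥ ‖g‖ := by
    intro lam
    rw [hgnorm]
    rcases le_or_gt 0 lam with hl | hl
    · calc R ≤ ‖(g + lam • f) k₀‖ := by
            simp only [ContinuousMap.add_apply, ContinuousMap.smul_apply]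
            rw [hgk₀, hfk₀u, smul_smul, ← add_smul, norm_smul, hu, mul_one,
              Real.norm_eq_abs, abs_of_pos (by nlinarith)]
            nlinarith
      _ ≤ ‖g + lam • f‖ := (g + lam • f).norm_coe_le_norm k₀
    · calc R ≤ ‖(g + lam • f) k₁‖ := by
            simp only [ContinuousMap.add_apply, ContinuousMap.smul_apply]
            rw [hgk₁, ← neg_one_smul ℝ (f k₁), ← add_smul, norm_smul, hk₁,
              Real.norm_eq_abs, abs_of_neg (by linarith)]
            nlinarith
      _ ≤ ‖g + lam • f‖ := (g + lam • f).norm_coe_le_norm k₁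
  -- apply right symmetry and get a contradiction with t = (R - c₂)/R
  have hfg := hrs g horth
  set t : ℝ := (R - c₂)/R with ht
  have ht0 : 0 < t := by rw [ht]; exact div_pos (by linarith) hR
  have htR : t * R = R - c₂ := by rw [ht]; field_simp
  have ht1 : t ≤ 1 := by nlinarith
  have hb : ∀ k, ‖(f + t • g) k‖ ≤ max c₂ (c₁ + t * R) := by
    intro k
    have hexp : (f + t • g) k = (1 - t * χ k) • f k + (t * (R * φ k)) • u := by
      simp only [ContinuousMap.add_apply, ContinuousMap.smul_apply, hgapp, smul_add,
        smul_smul, sub_smul, one_smul]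
      module
    rw [hexp]
    have hχnn := (hχm k).1
    have hχle := (hχm k).2
    have hφnn := (hφm k).1
    have hφle := (hφm k).2
    by_cases h : c₁ ≤ ‖f k‖
    · have hφk : φ k = 0 := hφ0 h
      rw [hφk, mul_zero, mul_zero, zero_smul, add_zero, norm_smul, Real.norm_eq_abs,
        abs_of_nonneg (by nlinarith)]
      refine le_trans ?_ (le_max_left _ _)
      by_cases h2 : c₂ ≤ ‖f k‖
      · have hχk : χ k = 1 := hχ1 h2
        rw [hχk, mul_one]
        have hfk := f.norm_coe_le_norm k
        nlinarith
      · push_neg at h2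
        nlinarith [mul_nonneg (mul_nonneg ht0.le hχnn) (norm_nonneg (f k))]
    · have hχk : χ k = 0 := hχ0 (le_of_not_ge h)
      rw [hχk, mul_zero, sub_zero, one_smul]
      refine le_trans (norm_add_le _ _) (le_trans ?_ (le_max_right _ _))
      rw [norm_smul, hu, mul_one, Real.norm_eq_abs, abs_of_nonneg (by positivity)]
      push_neg at h
      nlinarith
  have hmax0 : (0:ℝ) ≤ max c₂ (c₁ + t * R) := le_trans hc₂0.le (le_max_left _ _)
  have hbig : ‖f + t • g‖ ≤ max c₂ (c₁ + t * R) := ((f + t • g).norm_le hmax0).mpr hb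
  have hsmall : max c₂ (c₁ + t * R) < R := by
    rw [max_lt_iff]
    constructor
    · exact h3
    · rw [htR]; linarith
  have := hfg t
  linarith
end

section
/- Let K = [0,1] ∪ {2} and X = ℝ² with the max norm. The function f ∈ C(K, X) defined by f(k) = (1,1) for k ∈ [0,1] and f(2) = (1,0) satisfies M_f = K but is not a right symmetric point: the constant function g = (1/2, 1) satisfies g ⊥_B f but f is not ⊥_B g. -/
/-- The domain `K = [0,1] ∪ {2}`. -/
def Kset : Set ℝ := Set.Icc 0 1 ∪ {2}

instance : CompactSpace Kset :=
  isCompact_iff_compactSpace.mp ((isCompact_Icc).union isCompact_singleton)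

lemma norm_vec2_le (a b c : ℝ) (hc : 0 ≤ c) (ha : |a| ≤ c) (hb : |b| ≤ c) :
    ‖![a,b]‖ ≤ c := by
  apply pi_norm_le_iff_of_nonneg hc |>.mpr
  intro i
  fin_cases i <;> simpa [Real.norm_eq_abs]

lemma norm_vec2_ge0 (a b : ℝ) : |a| ≤ ‖![a,b]‖ := by
  simpa [Real.norm_eq_abs] using norm_le_pi_norm ![a,b] 0

lemma norm_vec2_ge1 (a b : ℝ) : |b| ≤ ‖![a,b]‖ := by
  simpa [Real.norm_eq_abs] using norm_le_pi_norm ![a,b] 1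

/-- The function `f` equal to `(1,1)` on `[0,1]` and `(1,0)` at `2` satisfies `M_f = K`
(where `X = ℝ²` with the max norm) but is not right symmetric: the constant function
`g = (1/2, 1)` satisfies `g ⊥_B f` while `f` is not `⊥_B g`. -/
theorem Mf_eq_K_not_right_symmetric
    (f : C(Kset, Fin 2 → ℝ))
    (hf1 : ∀ k : Kset, (k : ℝ) ∈ Set.Icc (0:ℝ) 1 → f k = ![1, 1])
    (hf2 : ∀ k : Kset, (k : ℝ) = 2 → f k = ![1, 0])
    (g : C(Kset, Fin 2 → ℝ)) (hg : ∀ k : Kset, g k = ![1/2, 1]) :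
    (∀ k : Kset, ‖f k‖ = ‖f‖) ∧
      (∀ lam : ℝ, ‖g + lam • f‖ ≥ ‖g‖) ∧
      ¬ (∀ lam : ℝ, ‖f + lam • g‖ ≥ ‖f‖) := by
  let k2 : Kset := ⟨2, Or.inr rfl⟩
  have hk2 : (k2 : ℝ) = 2 := rfl
  have hcases : ∀ k : Kset, (k : ℝ) ∈ Set.Icc (0:ℝ) 1 ∨ (k : ℝ) = 2 := fun k => k.2
  -- norms of values of f
  have hfk : ∀ k : Kset, ‖f k‖ = 1 := by
    intro k
    rcases hcases k with h | h
    · rw [hf1 k h]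
      refine le_antisymm (norm_vec2_le 1 1 1 one_pos.le (by norm_num) (by norm_num)) ?_
      simpa using norm_vec2_ge0 1 1
    · rw [hf2 k h]
      refine le_antisymm (norm_vec2_le 1 0 1 one_pos.le (by norm_num) (by norm_num)) ?_
      simpa using norm_vec2_ge0 1 0
  have hfnorm : ‖f‖ = 1 := by
    refine le_antisymm ?_ ?_
    · apply (f.norm_le one_pos.le).mpr
      intro k; rw [hfk k]
    · calc (1:ℝ) = ‖f k2‖ := (hfk k2).symm
        _ ≤ ‖f‖ := f.norm_coe_le_norm k2
  have hgk : ∀ k : Kset, ‖g k‖ = 1 := by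
    intro k; rw [hg k]
    refine le_antisymm (norm_vec2_le _ _ 1 one_pos.le (by rw [abs_of_nonneg] <;> norm_num) (by norm_num)) ?_
    simpa using norm_vec2_ge1 (1/2) 1
  have hgnorm : ‖g‖ = 1 := by
    refine le_antisymm ?_ ?_
    · apply (g.norm_le one_pos.le).mpr
      intro k; rw [hgk k]
    · calc (1:ℝ) = ‖g k2‖ := (hgk k2).symm
        _ ≤ ‖g‖ := g.norm_coe_le_norm k2
  refine ⟨fun k => by rw [hfk k, hfnorm], ?_, ?_⟩
  · intro lam
    rw [hgnorm]
    calc (1:ℝ) = |( (g + lam • f) k2) 1| := by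
          simp [hg k2, hf2 k2 hk2]
      _ ≤ ‖(g + lam • f) k2‖ := by
          simpa [Real.norm_eq_abs] using norm_le_pi_norm ((g + lam • f) k2) 1
      _ ≤ ‖g + lam • f‖ := (g + lam • f).norm_coe_le_norm k2
  · intro h
    have := h (-(1/2))
    rw [hfnorm] at this
    have hle : ‖f + (-(1/2):ℝ) • g‖ ≤ 3/4 := by
      apply ((f + (-(1/2):ℝ) • g).norm_le (by norm_num)).mpr
      intro k
      have hval : (f + (-(1/2):ℝ) • g) k = fun i => f k i + (-(1/2)) * g k i := by
        funext i
        simp [smul_eq_mul]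
      rcases hcases k with hk | hk
      · rw [hval, hf1 k hk, hg k]
        apply pi_norm_le_iff_of_nonneg (by norm_num) |>.mpr
        intro i; fin_cases i <;> simp [Real.norm_eq_abs] <;> norm_num [abs_le]
      · rw [hval, hf2 k hk, hg k]
        apply pi_norm_le_iff_of_nonneg (by norm_num) |>.mpr
        intro i; fin_cases i <;> simp [Real.norm_eq_abs] <;> norm_num [abs_le]
    linarith
end

section
/- Let K be a compact, connected Hausdorff space and X a real Banach space. Let f ∈ C(K, X) be such that M_f = K and f(k) is a right symmetric point in X for all k ∈ K. Then f is a right symmetric point of C(K, X). -/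
/-- If `g ⊥_B f` in `C(K,X)` (K compact nonempty), there is a point `k` where
`‖g k + μ • f k‖ ≥ ‖g‖` for all `μ > 0`. -/
lemma exists_point_right_orth {K X : Type*} [TopologicalSpace K] [CompactSpace K] [Nonempty K]
    [NormedAddCommGroup X] [NormedSpace ℝ X]
    (f g : C(K, X)) (hg : ∀ lam : ℝ, ‖g + lam • f‖ ≥ ‖g‖) :
    ∃ k : K, ∀ μ : ℝ, 0 < μ → ‖g‖ ≤ ‖g k + μ • f k‖ := by
  set S : ℕ → Set K := fun n => {k | ∀ μ : ℝ, 1 / (n + 1) ≤ μ → ‖g‖ ≤ ‖g k + μ • f k‖} with hS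
  have hcont : ∀ μ : ℝ, Continuous fun k => ‖g k + μ • f k‖ := fun μ =>
    (g.continuous.add (f.continuous.const_smul μ)).norm
  have hclosed : ∀ n, IsClosed (S n) := by
    intro n
    have : S n = ⋂ (μ : ℝ) (_ : 1 / (n + 1 : ℝ) ≤ μ), {k | ‖g‖ ≤ ‖g k + μ • f k‖} := by
      ext k; simp [hS, Set.mem_iInter]
    rw [this]
    exact isClosed_iInter fun μ => isClosed_iInter fun _ =>
      isClosed_le continuous_const (hcont μ)
  have hnonempty : ∀ n, (S n).Nonempty := by
    intro n
    set c : ℝ := 1 / (n + 1) with hc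
    have hc0 : 0 < c := by positivity
    obtain ⟨k, -, hk⟩ := isCompact_univ.exists_isMaxOn Set.univ_nonempty
      ((hcont c).continuousOn)
    have h1 : ‖g‖ ≤ ‖g k + c • f k‖ := by
      refine (hg c).trans ?_
      refine ((g + c • f).norm_le (norm_nonneg _)).mpr fun x => ?_
      simpa using hk (Set.mem_univ x)
    refine ⟨k, fun μ hμ => ?_⟩
    have hμ0 : 0 < μ := lt_of_lt_of_le hc0 hμ
    set t : ℝ := c / μ with htdef
    have ht0 : 0 < t := by positivity
    have ht1 : t ≤ 1 := by rw [htdef, div_le_one hμ0]; exact hμ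
    have htμ : t * μ = c := div_mul_cancel₀ c hμ0.ne'
    have hid : g k + c • f k = (1 - t) • g k + t • (g k + μ • f k) := by
      rw [smul_add, smul_smul, htμ, sub_smul, one_smul]; abel
    have h2 : ‖g k + c • f k‖ ≤ (1 - t) * ‖g k‖ + t * ‖g k + μ • f k‖ := by
      rw [hid]
      refine (norm_add_le _ _).trans ?_
      rw [norm_smul, norm_smul, Real.norm_of_nonneg (by linarith), Real.norm_of_nonneg ht0.le]
    have h3 : ‖g k‖ ≤ ‖g‖ := g.norm_coe_le_norm k
    nlinarith [h1.trans h2]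
  have hsub : ∀ n, S (n + 1) ⊆ S n := by
    intro n k hk μ hμ
    refine hk μ (le_trans ?_ hμ)
    have h1 : (0:ℝ) < (n : ℝ) + 1 := by positivity
    have h2 : ((n : ℝ) + 1) ≤ ((n + 1 : ℕ) : ℝ) + 1 := by push_cast; linarith
    exact one_div_le_one_div_of_le h1 h2
  obtain ⟨k, hk⟩ := IsCompact.nonempty_iInter_of_sequence_nonempty_isCompact_isClosed S hsub
    hnonempty ((hclosed 0).isCompact) hclosed
  refine ⟨k, fun μ hμ => ?_⟩
  obtain ⟨n, hn⟩ := exists_nat_one_div_lt hμ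
  exact (Set.mem_iInter.mp hk n) μ hn.le

/-- For `K` compact connected Hausdorff and `X` real Banach: if `f ∈ C(K, X)` attains its
norm everywhere and `f k` is a right symmetric point of `X` for every `k`, then `f` is a
right symmetric point of `C(K, X)`. -/
theorem right_symmetric_of_pointwise {K X : Type*} [TopologicalSpace K] [CompactSpace K]
    [ConnectedSpace K] [T2Space K]
    [NormedAddCommGroup X] [NormedSpace ℝ X] [CompleteSpace X]
    (f : C(K, X)) (hMf : ∀ k : K, ‖f k‖ = ‖f‖)
    (hrs : ∀ k : K, ∀ y : X, (∀ lam : ℝ, ‖y + lam • f k‖ ≥ ‖y‖) →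
      ∀ lam : ℝ, ‖f k + lam • y‖ ≥ ‖f k‖) :
    ∀ g : C(K, X), (∀ lam : ℝ, ‖g + lam • f‖ ≥ ‖g‖) →
      ∀ lam : ℝ, ‖f + lam • g‖ ≥ ‖f‖ := by
  intro g hg lam
  rcases isEmpty_or_nonempty K with hK | hK
  · have hf0 : f = 0 := by ext k; exact (IsEmpty.false k).elim
    rw [hf0, norm_zero]
    exact norm_nonneg _
  · set Dp : Set K := {k | ∀ μ : ℝ, 0 ≤ μ → ‖g k‖ ≤ ‖g k + μ • f k‖} with hDp
    set Dm : Set K := {k | ∀ μ : ℝ, μ ≤ 0 → ‖g k‖ ≤ ‖g k + μ • f k‖} with hDm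
    have hcont : ∀ μ : ℝ, Continuous fun k => ‖g k + μ • f k‖ := fun μ =>
      (g.continuous.add (f.continuous.const_smul μ)).norm
    have hclp : IsClosed Dp := by
      have : Dp = ⋂ (μ : ℝ) (_ : 0 ≤ μ), {k | ‖g k‖ ≤ ‖g k + μ • f k‖} := by
        ext k; simp [hDp, Set.mem_iInter]
      rw [this]
      exact isClosed_iInter fun μ => isClosed_iInter fun _ =>
        isClosed_le g.continuous.norm (hcont μ)
    have hclm : IsClosed Dm := by
      have : Dm = ⋂ (μ : ℝ) (_ : μ ≤ 0), {k | ‖g k‖ ≤ ‖g k + μ • f k‖} := by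
        ext k; simp [hDm, Set.mem_iInter]
      rw [this]
      exact isClosed_iInter fun μ => isClosed_iInter fun _ =>
        isClosed_le g.continuous.norm (hcont μ)
    have hnep : Dp.Nonempty := by
      obtain ⟨k, hk⟩ := exists_point_right_orth f g hg
      refine ⟨k, fun μ hμ => ?_⟩
      rcases hμ.eq_or_lt with h | h
      · simp [← h]
      · exact (g.norm_coe_le_norm k).trans (hk μ h)
    have hnem : Dm.Nonempty := by
      have hg' : ∀ lam : ℝ, ‖g + lam • (-f)‖ ≥ ‖g‖ := by
        intro lam
        have := hg (-lam)
        rwa [neg_smul, ← smul_neg] at this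
      obtain ⟨k, hk⟩ := exists_point_right_orth (-f) g hg'
      refine ⟨k, fun μ hμ => ?_⟩
      rcases hμ.eq_or_lt with h | h
      · simp [h]
      · have := hk (-μ) (by linarith)
        simp only [ContinuousMap.neg_apply, smul_neg, neg_smul, neg_neg] at this
        exact (g.norm_coe_le_norm k).trans this
    have hcover : (Set.univ : Set K) ⊆ Dp ∪ Dm := by
      intro k _
      by_contra hcon
      rw [Set.mem_union, not_or] at hcon
      obtain ⟨h1, h2⟩ := hcon
      simp only [hDp, hDm, Set.mem_setOf_eq, not_forall, not_le] at h1 h2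
      obtain ⟨μ₁, hμ₁, hlt₁⟩ := h1
      obtain ⟨μ₂, hμ₂, hlt₂⟩ := h2
      have hμ₁' : 0 < μ₁ := by
        rcases hμ₁.eq_or_lt with h | h
        · exfalso; rw [← h] at hlt₁; simp at hlt₁
        · exact h
      have hμ₂' : μ₂ < 0 := by
        rcases hμ₂.eq_or_lt with h | h
        · exfalso; rw [h] at hlt₂; simp at hlt₂
        · exact h
      have key : (μ₁ - μ₂) • g k = (-μ₂) • (g k + μ₁ • f k) + μ₁ • (g k + μ₂ • f k) := by
        module
      have hnorm : (μ₁ - μ₂) * ‖g k‖ ≤ (-μ₂) * ‖g k + μ₁ • f k‖ + μ₁ * ‖g k + μ₂ • f k‖ := by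
        calc (μ₁ - μ₂) * ‖g k‖ = ‖(μ₁ - μ₂) • g k‖ := by
              rw [norm_smul, Real.norm_of_nonneg (by linarith)]
          _ = ‖(-μ₂) • (g k + μ₁ • f k) + μ₁ • (g k + μ₂ • f k)‖ := by rw [key]
          _ ≤ ‖(-μ₂) • (g k + μ₁ • f k)‖ + ‖μ₁ • (g k + μ₂ • f k)‖ := norm_add_le _ _
          _ = (-μ₂) * ‖g k + μ₁ • f k‖ + μ₁ * ‖g k + μ₂ • f k‖ := by
              rw [norm_smul, norm_smul, Real.norm_of_nonneg (by linarith),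
                Real.norm_of_nonneg hμ₁'.le]
      nlinarith
    obtain ⟨k₀, -, hk₀p, hk₀m⟩ := isPreconnected_closed_iff.mp isPreconnected_univ Dp Dm
      hclp hclm hcover (⟨hnep.choose, trivial, hnep.choose_spec⟩)
      (⟨hnem.choose, trivial, hnem.choose_spec⟩)
    have hperp : ∀ μ : ℝ, ‖g k₀ + μ • f k₀‖ ≥ ‖g k₀‖ := fun μ => by
      rcases le_or_gt 0 μ with h | h
      · exact hk₀p μ h
      · exact hk₀m μ h.le
    have hkey := hrs k₀ (g k₀) hperp lam
    calc ‖f‖ = ‖f k₀‖ := (hMf k₀).symm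
      _ ≤ ‖f k₀ + lam • g k₀‖ := hkey
      _ = ‖(f + lam • g) k₀‖ := by simp
      _ ≤ ‖f + lam • g‖ := ContinuousMap.norm_coe_le_norm _ _
end

section
/- Let K be a locally compact Hausdorff space and X a Banach space. If f ∈ C₀(K, X) satisfies M_f = {k₀} and f(k₀) is a smooth point of X, then f is a smooth point of C₀(K, X). -/
open ZeroAtInfty

section Aux

variable {𝕜 K X : Type*} [RCLike 𝕜] [TopologicalSpace K]
    [NormedAddCommGroup X] [NormedSpace 𝕜 X]

theorem C0_norm_coe_le (g : C₀(K, X)) (k : K) : ‖g k‖ ≤ ‖g‖ := by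
  rw [← ZeroAtInftyContinuousMap.norm_toBCF_eq_norm]
  exact g.toBCF.norm_coe_le_norm k

theorem C0_norm_le (h : C₀(K, X)) {M : ℝ} (hM : 0 ≤ M) (hb : ∀ k, ‖h k‖ ≤ M) : ‖h‖ ≤ M := by
  rw [← ZeroAtInftyContinuousMap.norm_toBCF_eq_norm]
  exact (BoundedContinuousFunction.norm_le hM).2 hb

/-- Multiply a C₀ function by a `[-1,1]`-valued continuous real function (via coercion to 𝕜). -/
noncomputable def mulC0 (v : C(K, ℝ)) (hv : ∀ k, |v k| ≤ 1) (g : C₀(K, X)) : C₀(K, X) where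
  toFun := fun k => ((v k : ℝ) : 𝕜) • g k
  continuous_toFun := (RCLike.continuous_ofReal.comp v.continuous).smul
    (map_continuous (g : C₀(K, X)))
  zero_at_infty' := by
    have hb : ∀ k, ‖((v k : ℝ) : 𝕜) • g k‖ ≤ ‖g k‖ := by
      intro k
      rw [norm_smul, RCLike.norm_ofReal]
      calc |v k| * ‖g k‖ ≤ 1 * ‖g k‖ :=
            mul_le_mul_of_nonneg_right (hv k) (norm_nonneg _)
        _ = ‖g k‖ := one_mul _
    have ht : Filter.Tendsto (fun k => ‖g k‖) (Filter.cocompact K) (nhds 0) := by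
      simpa using (zero_at_infty (g : C₀(K, X))).norm
    exact squeeze_zero_norm hb ht

@[simp] theorem mulC0_apply (v : C(K, ℝ)) (hv : ∀ k, |v k| ≤ 1) (g : C₀(K, X)) (k : K) :
    (mulC0 (𝕜 := 𝕜) v hv g) k = ((v k : ℝ) : 𝕜) • g k := rfl

/-- `k ↦ u k • x` as an element of `C₀(K, X)` for compactly supported `u`. -/
noncomputable def bumpC0 (u : C(K, ℝ)) (hu : HasCompactSupport u) (x : X) : C₀(K, X) where
  toFun := fun k => ((u k : ℝ) : 𝕜) • x
  continuous_toFun := (RCLike.continuous_ofReal.comp u.continuous).smul continuous_const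
  zero_at_infty' := by
    have hev : (fun k => ((u k : ℝ) : 𝕜) • x) =ᶠ[Filter.cocompact K] 0 := by
      refine Filter.hasBasis_cocompact.eventually_iff.2 ⟨tsupport u, hu, fun k hk => ?_⟩
      simp [image_eq_zero_of_notMem_tsupport hk]
    exact Filter.Tendsto.congr' hev.symm tendsto_const_nhds

@[simp] theorem bumpC0_apply (u : C(K, ℝ)) (hu : HasCompactSupport u) (x : X) (k : K) :
    (bumpC0 (𝕜 := 𝕜) u hu x) k = ((u k : ℝ) : 𝕜) • x := rfl

theorem opNorm_eq_one_of {E : Type*} [NormedAddCommGroup E] [NormedSpace 𝕜 E]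
    (φ : E →L[𝕜] 𝕜) (x : E) (hx : x ≠ 0) (hval : φ x = (‖x‖ : 𝕜))
    (hle : ∀ y, ‖φ y‖ ≤ ‖y‖) : ‖φ‖ = 1 := by
  refine le_antisymm (φ.opNorm_le_bound zero_le_one (fun y => by simpa using hle y)) ?_
  have h1 : ‖x‖ ≤ ‖φ‖ * ‖x‖ := by
    calc ‖x‖ = ‖φ x‖ := by
          rw [hval, RCLike.norm_ofReal, abs_of_nonneg (norm_nonneg x)]
      _ ≤ ‖φ‖ * ‖x‖ := φ.le_opNorm x
  have hxpos : 0 < ‖x‖ := norm_pos_iff.2 hx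
  nlinarith

/-- Key vanishing lemma: if `φ` is a norming functional for `f` and `g` is supported
where `‖f·‖ ≤ m < ‖f‖`, then `φ g = 0`. -/
theorem key_vanish (φ : C₀(K, X) →L[𝕜] 𝕜) (hφn : ∀ h : C₀(K, X), ‖φ h‖ ≤ ‖h‖)
    (f : C₀(K, X)) (hφ2 : φ f = (‖f‖ : 𝕜)) (g : C₀(K, X)) {m : ℝ} (hm : m < ‖f‖)
    (hbound : ∀ k, g k ≠ 0 → ‖f k‖ ≤ m) : φ g = 0 := by
  by_contra ha
  set a : 𝕜 := φ g with ha_def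
  have hapos : 0 < ‖a‖ := norm_pos_iff.2 ha
  set c : 𝕜 := (starRingEnd 𝕜) a / (‖a‖ : 𝕜) with hc_def
  have hca : c * a = (‖a‖ : 𝕜) := by
    rw [hc_def, div_mul_eq_mul_div, RCLike.conj_mul, sq]
    rw [mul_div_assoc, div_self (by exact_mod_cast hapos.ne'), mul_one]
  have hcnorm : ‖c‖ = 1 := by
    rw [hc_def, norm_div, RCLike.norm_conj, RCLike.norm_ofReal,
      abs_of_nonneg hapos.le, div_self hapos.ne']
  set t : ℝ := (‖f‖ - m) / (‖g‖ + 1) with ht_def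
  have hgpos : (0:ℝ) < ‖g‖ + 1 := by positivity
  have htpos : 0 < t := div_pos (by linarith) hgpos
  set h : C₀(K, X) := f + ((t : 𝕜) * c) • g with hh_def
  have hhnorm : ‖h‖ ≤ ‖f‖ := by
    refine C0_norm_le h (norm_nonneg f) (fun k => ?_)
    by_cases hk : g k = 0
    · have : h k = f k := by simp [hh_def, hk]
      rw [this]; exact C0_norm_coe_le f k
    · have hk1 : ‖f k‖ ≤ m := hbound k hk
      have : h k = f k + ((t : 𝕜) * c) • g k := by simp [hh_def]
      rw [this]
      calc ‖f k + ((t : 𝕜) * c) • g k‖ ≤ ‖f k‖ + ‖((t : 𝕜) * c) • g k‖ := norm_add_le _ _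
        _ ≤ m + t * ‖g‖ := by
            rw [norm_smul, norm_mul, hcnorm, mul_one, RCLike.norm_ofReal,
              abs_of_nonneg htpos.le]
            exact add_le_add hk1 (mul_le_mul_of_nonneg_left (C0_norm_coe_le g k) htpos.le)
        _ ≤ m + (t * (‖g‖ + 1)) := by nlinarith
        _ = ‖f‖ := by
            rw [ht_def, div_mul_cancel₀ _ hgpos.ne']; ring
  have hφh : φ h = ((‖f‖ + t * ‖a‖ : ℝ) : 𝕜) := by
    rw [hh_def, map_add, map_smul, hφ2, ← ha_def, smul_eq_mul, mul_assoc, hca]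
    push_cast
    ring
  have hnφh : ‖φ h‖ = ‖f‖ + t * ‖a‖ := by
    rw [hφh, RCLike.norm_ofReal, abs_of_nonneg (by positivity)]
  have := (hφn h).trans hhnorm
  rw [hnφh] at this
  nlinarith

end Aux

/-- If `f ∈ C₀(K, X)` has norm-attaining set `{k₀}` and `f k₀` is a smooth point of `X`,
then `f` is a smooth point of `C₀(K, X)`. -/
theorem smooth_point_C0KX_sufficient {𝕜 K X : Type*} [RCLike 𝕜] [TopologicalSpace K]
    [LocallyCompactSpace K] [T2Space K]
    [NormedAddCommGroup X] [NormedSpace 𝕜 X] [CompleteSpace X]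
    (f : C₀(K, X)) (k₀ : K) (hMf : {k : K | ‖f k‖ = ‖f‖} = {k₀})
    (hsm : ∃! ψ : X →L[𝕜] 𝕜, ‖ψ‖ = 1 ∧ ψ (f k₀) = (‖f k₀‖ : 𝕜)) :
    ∃! φ : C₀(K, X) →L[𝕜] 𝕜, ‖φ‖ = 1 ∧ φ f = (‖f‖ : 𝕜) := by
  obtain ⟨ψ, ⟨hψ1, hψ2⟩, hψu⟩ := hsm
  have hk₀ : ‖f k₀‖ = ‖f‖ := hMf.symm.subset (Set.mem_singleton k₀)
  -- f k₀ ≠ 0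
  have hfk0 : f k₀ ≠ 0 := by
    intro h0
    have hneg : (-ψ : X →L[𝕜] 𝕜) = ψ := by
      refine hψu (-ψ) ⟨by simpa using hψ1, by simp [h0]⟩
    have hzz : ψ + ψ = 0 := by
      have h := congrArg (fun χ : X →L[𝕜] 𝕜 => χ + ψ) hneg
      simpa using h.symm
    have : ψ = 0 := by
      ext x
      have h := ContinuousLinearMap.ext_iff.1 hzz x
      simp only [ContinuousLinearMap.add_apply, ContinuousLinearMap.zero_apply] at h ⊢
      exact add_self_eq_zero.mp h
    rw [this] at hψ1
    simp at hψ1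
  have hfpos : 0 < ‖f‖ := hk₀ ▸ norm_pos_iff.2 hfk0
  -- strict bound outside any neighborhood of k₀
  have hsmall : ∀ U : Set K, IsOpen U → k₀ ∈ U → ∃ m, m < ‖f‖ ∧ ∀ k ∉ U, ‖f k‖ ≤ m := by
    intro U hUo hUk
    have hS : ∃ C : Set K, IsCompact C ∧ ∀ k ∉ C, ‖f k‖ < ‖f‖ / 2 := by
      have := (zero_at_infty f).norm
      rw [show ‖(0:X)‖ = 0 by simp] at this
      have hev : ∀ᶠ k in Filter.cocompact K, ‖f k‖ < ‖f‖ / 2 :=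
        this (Iio_mem_nhds (by positivity))
      obtain ⟨C, hC, hCsub⟩ := Filter.hasBasis_cocompact.eventually_iff.1 hev
      exact ⟨C, hC, fun k hk => hCsub hk⟩
    obtain ⟨C, hC, hCout⟩ := hS
    have hScl : IsClosed {k : K | ‖f‖ / 2 ≤ ‖f k‖} :=
      isClosed_le continuous_const ((map_continuous (f : C₀(K, X))).norm)
    have hSsub : {k : K | ‖f‖ / 2 ≤ ‖f k‖} ⊆ C := fun k hk => by
      by_contra hkC; exact absurd hk (not_le.2 (hCout k hkC))
    have hScomp : IsCompact {k : K | ‖f‖ / 2 ≤ ‖f k‖} := hC.of_isClosed_subset hScl hSsub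
    set T := {k : K | ‖f‖ / 2 ≤ ‖f k‖} ∩ Uᶜ with hT_def
    have hTcomp : IsCompact T := hScomp.inter_right hUo.isClosed_compl
    rcases T.eq_empty_or_nonempty with hTe | hTne
    · refine ⟨‖f‖ / 2, by linarith, fun k hk => ?_⟩
      by_contra hlt
      have : k ∈ T := ⟨le_of_lt (not_le.1 hlt), hk⟩
      rw [hTe] at this; exact this
    · obtain ⟨k₁, hk₁T, hk₁max⟩ :=
        hTcomp.exists_isMaxOn hTne ((map_continuous (f : C₀(K, X))).norm.continuousOn)
      have hk₁lt : ‖f k₁‖ < ‖f‖ := by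
        rcases lt_or_eq_of_le (C0_norm_coe_le f k₁) with h | h
        · exact h
        · exfalso
          have : k₁ ∈ ({k₀} : Set K) := hMf ▸ h
          rw [Set.mem_singleton_iff] at this
          exact hk₁T.2 (this ▸ hUk)
      refine ⟨max (‖f k₁‖) (‖f‖ / 2), max_lt hk₁lt (by linarith), fun k hk => ?_⟩
      by_cases hkS : ‖f‖ / 2 ≤ ‖f k‖
      · exact le_max_of_le_left (hk₁max ⟨hkS, hk⟩)
      · exact le_max_of_le_right (le_of_lt (not_le.1 hkS))
  -- the bump u at k₀
  obtain ⟨u, hu1, _hu0, huc, huI⟩ :=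
    exists_continuous_one_zero_of_isCompact (isCompact_singleton (x := k₀))
      isClosed_empty (Set.disjoint_empty _)
  have hu_abs : ∀ k, |u k| ≤ 1 := fun k => abs_le.2 ⟨by linarith [(huI k).1], (huI k).2⟩
  have huk₀ : u k₀ = 1 := hu1 rfl
  -- T : X →L[𝕜] C₀(K, X)
  set Tmap : X →ₗ[𝕜] C₀(K, X) :=
    { toFun := fun x => bumpC0 (𝕜 := 𝕜) u huc x
      map_add' := fun x y => by ext k; simp [smul_add]
      map_smul' := fun c x => by
        ext k
        simp only [RingHom.id_apply, ZeroAtInftyContinuousMap.smul_apply, bumpC0_apply]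
        rw [smul_comm] } with hTmap_def
  have hTnorm : ∀ x, ‖Tmap x‖ ≤ 1 * ‖x‖ := by
    intro x
    rw [one_mul]
    refine C0_norm_le _ (norm_nonneg x) (fun k => ?_)
    have : (Tmap x) k = ((u k : ℝ) : 𝕜) • x := rfl
    rw [this, norm_smul, RCLike.norm_ofReal]
    calc |u k| * ‖x‖ ≤ 1 * ‖x‖ := mul_le_mul_of_nonneg_right (hu_abs k) (norm_nonneg _)
      _ = ‖x‖ := one_mul _
  set T : X →L[𝕜] C₀(K, X) := LinearMap.mkContinuous Tmap 1 hTnorm with hT_def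
  have hT_apply : ∀ (x : X) (k : K), (T x) k = ((u k : ℝ) : 𝕜) • x := fun x k => rfl
  -- evaluation map
  set evL : C₀(K, X) →ₗ[𝕜] X :=
    { toFun := fun g => g k₀, map_add' := fun g h => rfl, map_smul' := fun c g => rfl }
    with hevL_def
  set ev : C₀(K, X) →L[𝕜] X :=
    LinearMap.mkContinuous evL 1 (fun g => by
      rw [one_mul]; exact C0_norm_coe_le g k₀) with hev_def
  have hev_apply : ∀ g : C₀(K, X), ev g = g k₀ := fun g => rfl
  set φ₀ : C₀(K, X) →L[𝕜] 𝕜 := ψ.comp ev with hφ₀_def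
  have hφ₀_apply : ∀ g : C₀(K, X), φ₀ g = ψ (g k₀) := fun g => rfl
  have hφ₀f : φ₀ f = (‖f‖ : 𝕜) := by rw [hφ₀_apply, hψ2, hk₀]
  have hφ₀le : ∀ g : C₀(K, X), ‖φ₀ g‖ ≤ ‖g‖ := by
    intro g
    calc ‖φ₀ g‖ = ‖ψ (g k₀)‖ := by rw [hφ₀_apply]
      _ ≤ ‖ψ‖ * ‖g k₀‖ := ψ.le_opNorm _
      _ = ‖g k₀‖ := by rw [hψ1, one_mul]
      _ ≤ ‖g‖ := C0_norm_coe_le g k₀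
  have hfne : f ≠ 0 := fun h => by simp [h] at hfpos
  refine ⟨φ₀, ⟨opNorm_eq_one_of φ₀ f hfne hφ₀f hφ₀le, hφ₀f⟩, ?_⟩
  -- uniqueness
  rintro φ ⟨hφ1, hφ2⟩
  have hφle : ∀ h : C₀(K, X), ‖φ h‖ ≤ ‖h‖ := fun h => by
    calc ‖φ h‖ ≤ ‖φ‖ * ‖h‖ := φ.le_opNorm h
      _ = ‖h‖ := by rw [hφ1, one_mul]
  -- φ vanishes on functions vanishing at k₀
  have hvan : ∀ g : C₀(K, X), g k₀ = 0 → φ g = 0 := by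
    intro g hg0
    have hsmallnorm : ∀ ε : ℝ, 0 < ε → ‖φ g‖ ≤ ε := by
      intro ε hε
      set V : Set K := {k | ‖g k‖ < ε} with hV_def
      have hVo : IsOpen V := isOpen_lt (map_continuous (g : C₀(K, X))).norm continuous_const
      have hVk : k₀ ∈ V := by simp [hV_def, hg0, hε]
      obtain ⟨N, hNc, hNk, hNV⟩ := exists_compact_subset hVo hVk
      obtain ⟨v, hv1, hv0, hvc, hvI⟩ :=
        exists_continuous_one_zero_of_isCompact hNc hVo.isClosed_compl
          (Set.disjoint_compl_right_iff_subset.2 hNV)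
      have hv_abs : ∀ k, |v k| ≤ 1 := fun k => abs_le.2 ⟨by linarith [(hvI k).1], (hvI k).2⟩
      set vg : C₀(K, X) := mulC0 (𝕜 := 𝕜) v hv_abs g with hvg_def
      obtain ⟨m, hm, hmb⟩ := hsmall (interior N) isOpen_interior hNk
      have hgone : φ (g - vg) = 0 := by
        refine key_vanish φ hφle f hφ2 (g - vg) hm (fun k hk => ?_)
        refine hmb k (fun hkN => hk ?_)
        have : v k = 1 := hv1 (interior_subset hkN)
        simp [hvg_def, this]
      have hvgle : ‖vg‖ ≤ ε := by
        refine C0_norm_le vg hε.le (fun k => ?_)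
        by_cases hkV : k ∈ V
        · have : ‖(vg) k‖ ≤ ‖g k‖ := by
            rw [hvg_def, mulC0_apply, norm_smul, RCLike.norm_ofReal]
            calc |v k| * ‖g k‖ ≤ 1 * ‖g k‖ :=
                  mul_le_mul_of_nonneg_right (hv_abs k) (norm_nonneg _)
              _ = ‖g k‖ := one_mul _
          exact this.trans (le_of_lt hkV)
        · have : v k = 0 := hv0 hkV
          simp [hvg_def, this, hε.le]
      have : φ g = φ vg := by
        have := congrArg (· + φ vg) hgone
        simpa [map_sub] using this
      rw [this]
      exact (hφle vg).trans hvgle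
    by_contra hne
    have h2 : 0 < ‖φ g‖ / 2 := by
      have : φ g ≠ 0 := hne
      have := norm_pos_iff.2 this
      linarith
    have := hsmallnorm (‖φ g‖ / 2) h2
    linarith
  -- for all g, φ g = φ (T (g k₀))
  have hsplit : ∀ g : C₀(K, X), φ g = φ (T (g k₀)) := by
    intro g
    have h0 : (g - T (g k₀)) k₀ = 0 := by
      have : (g - T (g k₀)) k₀ = g k₀ - ((u k₀ : ℝ) : 𝕜) • g k₀ := rfl
      rw [this, huk₀]
      push_cast
      rw [one_smul, sub_self]
    have := hvan (g - T (g k₀)) h0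
    rw [map_sub, sub_eq_zero] at this
    exact this
  set χ : X →L[𝕜] 𝕜 := φ.comp T with hχ_def
  have hχ_apply : ∀ x : X, χ x = φ (T x) := fun x => rfl
  have hχle : ∀ x : X, ‖χ x‖ ≤ ‖x‖ := by
    intro x
    calc ‖χ x‖ = ‖φ (T x)‖ := rfl
      _ ≤ ‖T x‖ := hφle _
      _ ≤ 1 * ‖x‖ := hTnorm x
      _ = ‖x‖ := one_mul _
  have hχf : χ (f k₀) = (‖f k₀‖ : 𝕜) := by
    rw [hχ_apply, ← hsplit f, hφ2, hk₀]
  have hχ1 : ‖χ‖ = 1 := opNorm_eq_one_of χ (f k₀) hfk0 hχf hχle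
  have hχψ : χ = ψ := hψu χ ⟨hχ1, hχf⟩
  ext g
  rw [hsplit g, ← hχ_apply, hχψ, ← hφ₀_apply]
end
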